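/- arXiv:1407.4339 — 7 statements merged into one kernel-verified Lean document; each statement's English description precedes it below -/
import Mathlib

section
/- Let G be the graph obtained from a star K_{1,n} (n ≥ 2) by subdividing every edge exactly once. Then Δ(G) = n and χ'(G) = n, but the precolouring that assigns colour 1 to every pendant edge (the n edges incident to leaves, which form a matching) cannot be extended to a proper edge-colouring of G using only the palette {1, …, n}. -/
variable {V E : Type*}

/-- Edges `e` and `f` of a multigraph (given by its endpoint map `ends`) are adjacent:
they are distinct and share an endpoint. -/
def MAdj (ends : E → Sym2 V) (e f : E) : Prop :=
  e ≠ f ∧ ∃ v : V, v ∈ ends e ∧ v ∈ ends f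

/-- `c` is a proper edge-colouring of the multigraph: adjacent edges get distinct colours. -/
def MProper (ends : E → Sym2 V) (c : E → ℕ) : Prop :=
  ∀ e f : E, MAdj ends e f → c e ≠ c f

/-- The degree of a vertex `v`: the number of edges incident with it. -/
noncomputable def mdeg (ends : E → Sym2 V) (v : V) : ℕ :=
  {e : E | v ∈ ends e}.ncard


/-- The star `K_{1,n}` with every edge subdivided once: centre `Sum.inl ()`, middle
vertices `Sum.inr (Sum.inl i)` and leaves `Sum.inr (Sum.inr i)`; edge `Sum.inl i` is
the spoke from the centre to the `i`-th middle vertex, and `Sum.inr i` is the pendant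
edge from the `i`-th middle vertex to the `i`-th leaf. -/
def subStarEnds (n : ℕ) : (Fin n ⊕ Fin n) → Sym2 (Unit ⊕ (Fin n ⊕ Fin n))
  | Sum.inl i => s(Sum.inl (), Sum.inr (Sum.inl i))
  | Sum.inr i => s(Sum.inr (Sum.inl i), Sum.inr (Sum.inr i))

lemma deg_centre (n : ℕ) : mdeg (subStarEnds n) (Sum.inl ()) = n := by
  have h : {e : Fin n ⊕ Fin n | Sum.inl () ∈ subStarEnds n e} = Set.range Sum.inl := by
    ext e
    cases e with
    | inl i => simp [subStarEnds]
    | inr i => simp [subStarEnds]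
  rw [mdeg, h, ← Set.image_univ, Set.ncard_image_of_injective _ Sum.inl_injective,
    Set.ncard_univ, Nat.card_eq_fintype_card, Fintype.card_fin]

lemma deg_mid (n : ℕ) (i : Fin n) :
    mdeg (subStarEnds n) (Sum.inr (Sum.inl i)) = 2 := by
  have h : {e : Fin n ⊕ Fin n | Sum.inr (Sum.inl i) ∈ subStarEnds n e}
      = {Sum.inl i, Sum.inr i} := by
    ext e
    cases e with
    | inl j => simp [subStarEnds, eq_comm]
    | inr j => simp [subStarEnds, eq_comm]
  rw [mdeg, h, Set.ncard_pair (by simp)]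

lemma deg_leaf (n : ℕ) (i : Fin n) :
    mdeg (subStarEnds n) (Sum.inr (Sum.inr i)) = 1 := by
  have h : {e : Fin n ⊕ Fin n | Sum.inr (Sum.inr i) ∈ subStarEnds n e}
      = {Sum.inr i} := by
    ext e
    cases e with
    | inl j => simp [subStarEnds]
    | inr j => simp [subStarEnds, eq_comm]
  rw [mdeg, h, Set.ncard_singleton]

/-- The explicit good colouring. -/
def goodCol (n : ℕ) : Fin n ⊕ Fin n → ℕ
  | Sum.inl i => i.val + 1
  | Sum.inr i => if i.val + 1 < n then i.val + 2 else 1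

lemma spokes_inj (n : ℕ) (c : Fin n ⊕ Fin n → ℕ)
    (hc : MProper (subStarEnds n) c) :
    Function.Injective (fun i : Fin n => c (Sum.inl i)) := by
  intro i j hij
  by_contra hne
  exact hc (Sum.inl i) (Sum.inl j)
    ⟨fun h => hne (Sum.inl.inj h), Sum.inl (), by simp [subStarEnds], by simp [subStarEnds]⟩
    hij

/-- For the subdivided star with `n ≥ 2` spokes: the maximum degree is `n`, the
chromatic index is `n`, but the precolouring giving every pendant edge colour `1`
does not extend to a proper edge-colouring with palette `{1, …, n}`. -/
theorem subdivided_star_no_extension (n : ℕ) (hn : 2 ≤ n) :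
    Finset.univ.sup (mdeg (subStarEnds n)) = n ∧
    IsLeast {m : ℕ | ∃ c : (Fin n ⊕ Fin n) → ℕ,
      MProper (subStarEnds n) c ∧ ∀ e, c e ∈ Finset.Icc 1 m} n ∧
    ¬ ∃ c : (Fin n ⊕ Fin n) → ℕ, MProper (subStarEnds n) c ∧
      (∀ e, c e ∈ Finset.Icc 1 n) ∧ ∀ i : Fin n, c (Sum.inr i) = 1 := by
  refine ⟨?_, ⟨?_, ?_⟩, ?_⟩
  · -- max degree = n
    apply le_antisymm
    · apply Finset.sup_le
      intro v _
      match v with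
      | Sum.inl () => rw [deg_centre]
      | Sum.inr (Sum.inl i) => rw [deg_mid]; omega
      | Sum.inr (Sum.inr i) => rw [deg_leaf]; omega
    · calc n = mdeg (subStarEnds n) (Sum.inl ()) := (deg_centre n).symm
        _ ≤ _ := Finset.le_sup (Finset.mem_univ _)
  · -- n is achieved by goodCol
    refine ⟨goodCol n, ?_, ?_⟩
    · rintro e f ⟨hne, v, hv1, hv2⟩
      match e, f with
      | Sum.inl i, Sum.inl j =>
        have : i ≠ j := fun h => hne (by rw [h])
        have : i.val ≠ j.val := fun h => this (Fin.val_injective h)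
        simp only [goodCol]; omega
      | Sum.inl i, Sum.inr j =>
        have hij : i = j := by
          simp only [subStarEnds, Sym2.mem_iff] at hv1 hv2
          rcases hv1 with h1 | h1 <;> rcases hv2 with h2 | h2 <;>
            subst h1 <;> simp_all
        subst hij
        have := i.isLt
        simp only [goodCol]
        split <;> omega
      | Sum.inr i, Sum.inl j =>
        have hij : i = j := by
          simp only [subStarEnds, Sym2.mem_iff] at hv1 hv2
          rcases hv1 with h1 | h1 <;> rcases hv2 with h2 | h2 <;>
            subst h1 <;> simp_all
        subst hij
        have := i.isLt
        simp only [goodCol]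
        split <;> omega
      | Sum.inr i, Sum.inr j =>
        exfalso
        have hij : i = j := by
          simp only [subStarEnds, Sym2.mem_iff] at hv1 hv2
          rcases hv1 with h1 | h1 <;> rcases hv2 with h2 | h2 <;>
            subst h1 <;> simp_all
        exact hne (by rw [hij])
    · intro e
      match e with
      | Sum.inl i => have := i.isLt; simp only [goodCol, Finset.mem_Icc]; omega
      | Sum.inr i =>
        have := i.isLt; simp only [goodCol, Finset.mem_Icc]
        split <;> omega
  · -- lower bound for chromatic index
    rintro m ⟨c, hc, hpal⟩
    have hinj := spokes_inj n c hc
    have hmap : ∀ i ∈ (Finset.univ : Finset (Fin n)),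
        c (Sum.inl i) ∈ Finset.Icc 1 m := fun i _ => hpal (Sum.inl i)
    have := Finset.card_le_card_of_injOn (fun i => c (Sum.inl i)) hmap hinj.injOn
    simpa [Nat.card_Icc] using this
  · -- no extension
    rintro ⟨c, hc, hpal, h1⟩
    have hne1 : ∀ i : Fin n, c (Sum.inl i) ≠ 1 := by
      intro i h
      exact hc (Sum.inl i) (Sum.inr i)
        ⟨by simp, Sum.inr (Sum.inl i), by simp [subStarEnds], by simp [subStarEnds]⟩
        (by rw [h, h1 i])
    have hmap : ∀ i ∈ (Finset.univ : Finset (Fin n)),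
        c (Sum.inl i) ∈ Finset.Icc 2 n := by
      intro i _
      have := hpal (Sum.inl i)
      have := hne1 i
      simp only [Finset.mem_Icc] at *
      omega
    have := Finset.card_le_card_of_injOn (fun i => c (Sum.inl i)) hmap
      (spokes_inj n c hc).injOn
    simp only [Finset.card_univ, Fintype.card_fin, Nat.card_Icc] at this
    omega
end

section
/- Let G be a bipartite multigraph with maximum degree Δ, let k ≥ 1, and take the palette K = {1, …, Δ+k}. If G is properly precoloured on a set S of edges so that every vertex is incident with at most k precoloured edges, then the precolouring extends to a proper edge-colouring of all of G using colours from K. -/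
/-!
Write each edge as `ab` with `a` on the `true` side, and let `p v` count the precoloured edges at
`v`. An uncoloured edge `ab` may take any colour not used on an adjacent precoloured edge; there are
at least `Δ + k - p a - p b ≥ Δ - p a` of them, which is at least the number of uncoloured edges
at `a`, and likewise at `b`. So the uncoloured edges can be coloured from these lists by the
Borodin–Kostochka–Woodall theorem.

That theorem follows Galvin's kernel method. Rank the edges at every vertex and let `e → f` when
`f` outranks `e` at a common end. Stable matchings (Gale–Shapley) are kernels of this digraph, and
lists longer than the out-degrees of a digraph whose induced subdigraphs all have kernels can be
coloured from. Rankings in which fewer than `max (d a) (d b)` edges outrank `ab` are built by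
removing a nonempty matching `M` such that every edge meeting `M` at its `a`-end also meets `M` at
its `b`-end (or the mirror image), ranking the rest recursively, and putting `M` on top at the
`a`-ends and at the bottom at the `b`-ends. Such an `M` exists by Hall's theorem: it saturates all
`a`-ends, or it matches the neighbourhood of a set of maximal deficiency back into that set.
-/

variable {V E : Type*}

open Finset

namespace BipartiteMultigraph

open scoped Classical

variable {X Y α : Type*}

def IsKernel (adj D : E → E → Prop) (G M : Finset E) : Prop :=
  M ⊆ G ∧ (∀ m ∈ M, ∀ m' ∈ M, ¬ adj m m') ∧ ∀ e ∈ G \ M, ∃ m ∈ M, D e m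

theorem IsKernel.nonempty {adj D : E → E → Prop} {G M : Finset E} (hM : IsKernel adj D G M)
    (hG : G.Nonempty) : M.Nonempty := by
  obtain ⟨e, he⟩ := hG
  by_cases heM : e ∈ M
  · exact ⟨e, heM⟩
  · obtain ⟨m, hm, -⟩ := hM.2.2 e (mem_sdiff.2 ⟨he, heM⟩)
    exact ⟨m, hm⟩

theorem card_filter_sdiff_lt {D : E → Prop} {F M : Finset E} {m : E} (hmF : m ∈ F)
    (hmM : m ∈ M) (hm : D m) : #{f ∈ F \ M | D f} < #{f ∈ F | D f} := by
  refine card_lt_card ⟨filter_subset_filter _ sdiff_subset, fun h => ?_⟩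
  exact (mem_sdiff.1 (mem_filter.1 (h (mem_filter.2 ⟨hmF, hm⟩))).1).2 hmM

/-- Bondy–Boppana–Siegel. -/
theorem exists_listColoring_of_isKernel [Nonempty α] (adj D : E → E → Prop) (F : Finset E)
    (L : E → Finset α) (hker : ∀ G ⊆ F, ∃ M, IsKernel adj D G M)
    (hL : ∀ e ∈ F, #{f ∈ F | D e f} < #(L e)) :
    ∃ c : E → α, (∀ e ∈ F, c e ∈ L e) ∧ ∀ e ∈ F, ∀ f ∈ F, adj e f → c e ≠ c f := by
  induction F using Finset.strongInduction generalizing L with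
  | H F ih =>
  rcases F.eq_empty_or_nonempty with rfl | ⟨e₀, he₀⟩
  · exact ⟨fun _ => Classical.arbitrary α, by simp, by simp⟩
  obtain ⟨γ, hγ⟩ : (L e₀).Nonempty := card_pos.1 (Nat.zero_lt_of_lt (hL e₀ he₀))
  obtain ⟨M, hM⟩ := hker {e ∈ F | γ ∈ L e} (filter_subset _ _)
  have ⟨hMG, hMind, hMdom⟩ := hM
  have hMF : M ⊆ F := hMG.trans (filter_subset _ _)
  have hMne : M.Nonempty := hM.nonempty ⟨e₀, mem_filter.2 ⟨he₀, hγ⟩⟩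
  have hsub : F \ M ⊂ F := sdiff_ssubset hMF hMne
  -- colour the kernel `M` with `γ` and delete `γ` from every other list
  obtain ⟨c, hcL, hc⟩ := ih (F \ M) hsub (fun e => (L e).erase γ)
    (fun G hG => hker G (hG.trans sdiff_subset)) (by
      intro e he
      obtain ⟨heF, heM⟩ := mem_sdiff.1 he
      by_cases hγe : γ ∈ L e
      · obtain ⟨m, hmM, hm⟩ := hMdom e (mem_sdiff.2 ⟨mem_filter.2 ⟨heF, hγe⟩, heM⟩)
        have := card_filter_sdiff_lt (hMF hmM) hmM hm
        have := hL e heF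
        rw [card_erase_of_mem hγe]
        omega
      · rw [erase_eq_of_notMem hγe]
        exact (card_le_card (filter_subset_filter _ sdiff_subset)).trans_lt (hL e heF))
  have hcγ : ∀ e ∈ F \ M, c e ≠ γ := fun e he h => notMem_erase γ (L e) (h ▸ hcL e he)
  refine ⟨fun e => if e ∈ M then γ else c e, fun e he => ?_, fun e he f hf hef => ?_⟩
  · by_cases heM : e ∈ M
    · simpa [heM] using (mem_filter.1 (hMG heM)).2
    · simpa [heM] using mem_of_mem_erase (hcL e (mem_sdiff.2 ⟨he, heM⟩))
  · by_cases heM : e ∈ M <;> by_cases hfM : f ∈ M <;> simp only [heM, hfM, if_true, if_false]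
    · exact absurd hef (hMind e heM f hfM)
    · exact (hcγ f (mem_sdiff.2 ⟨hf, hfM⟩)).symm
    · exact hcγ e (mem_sdiff.2 ⟨he, heM⟩)
    · exact hc e (mem_sdiff.2 ⟨he, heM⟩) f (mem_sdiff.2 ⟨hf, hfM⟩) hef

section Bipartite

variable (a : E → X) (b : E → Y)

def IsMatching (M : Finset E) : Prop := Set.InjOn a M ∧ Set.InjOn b M

def Adj (e f : E) : Prop := e ≠ f ∧ (a e = a f ∨ b e = b f)

/-- `ρa e` is the rank of `e` among the edges at `a e`, and `ρb e` its rank at `b e`. -/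
def Outranked (ρa ρb : E → ℕ) (e f : E) : Prop :=
  (a f = a e ∧ ρa e < ρa f) ∨ (b f = b e ∧ ρb e < ρb f)

variable {a b}

theorem IsMatching.symm {M : Finset E} (hM : IsMatching a b M) : IsMatching b a M :=
  ⟨hM.2, hM.1⟩

variable {ρa ρb : E → ℕ} {G : Finset E}

theorem isKernel_of_sdiff_rejected {p : E} (hpG : p ∈ G)
    (hp : ∀ f ∈ G, a f = a p → ρa f ≤ ρa p) {M : Finset E}
    (hM : IsKernel (Adj a b) (Outranked a b ρa ρb) (G \ {f ∈ G | b f = b p ∧ ρb f < ρb p}) M) :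
    IsKernel (Adj a b) (Outranked a b ρa ρb) G M := by
  obtain ⟨hMG, hMind, hMdom⟩ := hM
  refine ⟨hMG.trans sdiff_subset, hMind, fun e he => ?_⟩
  obtain ⟨heG, heM⟩ := mem_sdiff.1 he
  by_cases hrej : b e = b p ∧ ρb e < ρb p
  swap
  · exact hMdom e (mem_sdiff.2 ⟨mem_sdiff.2 ⟨heG, by simp [hrej]⟩, heM⟩)
  by_cases hpM : p ∈ M
  · exact ⟨p, hpM, Or.inr ⟨hrej.1.symm, hrej.2⟩⟩
  -- `p` is top at its `a`-end, so whatever outranks `p` does so at `b p`, and then outranks `e`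
  obtain ⟨m, hmM, hm | hm⟩ := hMdom p (mem_sdiff.2 ⟨mem_sdiff.2 ⟨hpG, by simp⟩, hpM⟩)
  · exact absurd (hp m (mem_sdiff.1 (hMG hmM)).1 hm.1) (not_le.2 hm.2)
  · exact ⟨m, hmM, Or.inr ⟨hm.1.trans hrej.1.symm, hrej.2.trans hm.2⟩⟩

theorem isKernel_leftTops (ha : Set.InjOn (fun e => (a e, ρa e)) G)
    (hb : Set.InjOn (fun e => (b e, ρb e)) G)
    (htop : ∀ p ∈ G, (∀ f ∈ G, a f = a p → ρa f ≤ ρa p) →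
      ∀ f ∈ G, b f = b p → ρb p ≤ ρb f) :
    IsKernel (Adj a b) (Outranked a b ρa ρb) G {p ∈ G | ∀ f ∈ G, a f = a p → ρa f ≤ ρa p} := by
  refine ⟨filter_subset _ _, ?_, fun e he => ?_⟩
  · rintro m hm m' hm' ⟨hne, h | h⟩ <;> obtain ⟨hmG, hmtop⟩ := mem_filter.1 hm <;>
      obtain ⟨hm'G, hm'top⟩ := mem_filter.1 hm'
    · refine hne (ha hmG hm'G (Prod.ext h (le_antisymm ?_ ?_)))
      exacts [hm'top m hmG h, hmtop m' hm'G h.symm]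
    · exact hne (hb hmG hm'G (Prod.ext h (le_antisymm (htop m hmG hmtop m' hm'G h.symm)
        (htop m' hm'G hm'top m hmG h))))
  obtain ⟨heG, heP⟩ := mem_sdiff.1 he
  obtain ⟨p, hp, hpmax⟩ := exists_max_image {f ∈ G | a f = a e} ρa ⟨e, mem_filter.2 ⟨heG, rfl⟩⟩
  obtain ⟨hpG, hpe⟩ := mem_filter.1 hp
  have hpP : p ∈ {p ∈ G | ∀ f ∈ G, a f = a p → ρa f ≤ ρa p} :=
    mem_filter.2 ⟨hpG, fun f hf hfp => hpmax f (mem_filter.2 ⟨hf, hfp.trans hpe⟩)⟩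
  have hne : (a e, ρa e) ≠ (a p, ρa p) := fun h => heP (ha heG hpG h ▸ hpP)
  refine ⟨p, hpP, Or.inl ⟨hpe, lt_of_le_of_ne (hpmax e (mem_filter.2 ⟨heG, rfl⟩)) ?_⟩⟩
  exact fun h => hne (Prod.ext hpe.symm h)

/-- Gale–Shapley: a stable matching. -/
theorem exists_isKernel_outranked (ha : Set.InjOn (fun e => (a e, ρa e)) G)
    (hb : Set.InjOn (fun e => (b e, ρb e)) G) :
    ∃ M, IsKernel (Adj a b) (Outranked a b ρa ρb) G M := by
  induction G using Finset.strongInduction with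
  | H G ih =>
  by_cases h : ∃ p ∈ G, (∀ f ∈ G, a f = a p → ρa f ≤ ρa p) ∧
      ∃ f ∈ G, b f = b p ∧ ρb f < ρb p
  · obtain ⟨p, hpG, hp, f, hfG, hf⟩ := h
    have hsub : G \ {f ∈ G | b f = b p ∧ ρb f < ρb p} ⊂ G :=
      sdiff_ssubset (filter_subset _ _) ⟨f, mem_filter.2 ⟨hfG, hf⟩⟩
    obtain ⟨M, hM⟩ := ih _ hsub (ha.mono (by simp)) (hb.mono (by simp))
    exact ⟨M, isKernel_of_sdiff_rejected hpG hp hM⟩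
  · push Not at h
    exact ⟨_, isKernel_leftTops ha hb h⟩

end Bipartite

section Hall

variable (a : E → X) (b : E → Y)

noncomputable def nbhd (F : Finset E) (W : Finset X) : Finset Y := {f ∈ F | a f ∈ W}.image b

variable {a b} {F : Finset E}

theorem exists_isMatching_image_eq_of_hall
    (hall : ∀ W ⊆ F.image a, #W ≤ #(nbhd a b F W)) :
    ∃ M ⊆ F, IsMatching a b M ∧ M.image a = F.image a := by
  obtain ⟨g, hg, hgF⟩ := (all_card_le_biUnion_card_iff_exists_injective
    (fun x : F.image a => nbhd a b F {x.1})).1 fun s => by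
      have hs : s.biUnion (fun x => nbhd a b F {x.1}) =
          nbhd a b F (s.map (Function.Embedding.subtype _)) := by
        ext y; simp [nbhd]; aesop
      rw [hs, ← card_map (Function.Embedding.subtype _)]
      exact hall _ fun x hx => by
        obtain ⟨y, -, rfl⟩ := mem_map.1 hx
        exact y.2
  have hε : ∀ x : F.image a, ∃ e ∈ F, a e = x ∧ b e = g x := fun x => by
    simpa [nbhd, and_assoc] using hgF x
  choose ε hεF hεa hεb using hε
  refine ⟨univ.image ε, image_subset_iff.2 fun x _ => hεF x, ⟨?_, ?_⟩, ?_⟩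
  · simp only [coe_image, coe_univ, Set.image_univ]
    rintro _ ⟨x, rfl⟩ _ ⟨y, rfl⟩ h
    rw [Subtype.ext (by simpa [hεa] using h : x.1 = y.1)]
  · simp only [coe_image, coe_univ, Set.image_univ]
    rintro _ ⟨x, rfl⟩ _ ⟨y, rfl⟩ h
    rw [hg (by simpa [hεb] using h : g x = g y)]
  · rw [image_image, show a ∘ ε = Subtype.val from funext hεa, univ_eq_attach, attach_image_val]

theorem hall_nbhd_of_maximal_deficiency {W : Finset X}
    (hW : ∀ W' ⊆ W, (#W' : ℤ) - #(nbhd a b F W') ≤ #W - #(nbhd a b F W)) :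
    ∀ T ⊆ nbhd a b F W, #T ≤ #(nbhd b a {f ∈ F | a f ∈ W} T) := by
  intro T hT
  let W' := W \ nbhd b a {f ∈ F | a f ∈ W} T
  have hW' : nbhd a b F W' ⊆ nbhd a b F W \ T := by
    intro y hy
    obtain ⟨f, hf, rfl⟩ := mem_image.1 hy
    obtain ⟨hfF, hfW'⟩ := mem_filter.1 hf
    obtain ⟨hfW, hfT⟩ := mem_sdiff.1 hfW'
    refine mem_sdiff.2 ⟨mem_image_of_mem b (mem_filter.2 ⟨hfF, hfW⟩), fun hbf => hfT ?_⟩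
    exact mem_image_of_mem a (mem_filter.2 ⟨mem_filter.2 ⟨hfF, hfW⟩, hbf⟩)
  have h₁ := hW W' sdiff_subset
  have h₂ : #W ≤ #W' + #(nbhd b a {f ∈ F | a f ∈ W} T) := card_le_card_sdiff_add_card
  have h₃ := card_le_card hW'
  have h₄ := card_sdiff_add_card_eq_card hT
  omega

theorem exists_isMatching_image_closed (hF : F.Nonempty) :
    ∃ M ⊆ F, M.Nonempty ∧ IsMatching a b M ∧
      ((∀ f ∈ F, a f ∈ M.image a → b f ∈ M.image b) ∨
        (∀ f ∈ F, b f ∈ M.image b → a f ∈ M.image a)) := by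
  by_cases hall : ∀ W ⊆ F.image a, #W ≤ #(nbhd a b F W)
  · obtain ⟨M, hMF, hM, himg⟩ := exists_isMatching_image_eq_of_hall hall
    refine ⟨M, hMF, ?_, hM, Or.inr fun f hf _ => himg ▸ mem_image_of_mem a hf⟩
    rw [← image_nonempty (f := a), himg]
    exact hF.image a
  push Not at hall
  obtain ⟨W₀, hW₀, hdef₀⟩ := hall
  obtain ⟨W, hW, hWmax⟩ := exists_max_image (F.image a).powerset
    (fun W => (#W : ℤ) - #(nbhd a b F W)) ⟨W₀, mem_powerset.2 hW₀⟩
  have hWF := mem_powerset.1 hW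
  have hdef := hWmax W₀ (mem_powerset.2 hW₀)
  obtain ⟨x, hx⟩ : W.Nonempty := by
    rw [nonempty_iff_ne_empty]
    rintro rfl
    have : nbhd a b F ∅ = ∅ := by simp [nbhd]
    simp only [this, card_empty] at hdef
    omega
  obtain ⟨M, hMF, hM, himg⟩ := exists_isMatching_image_eq_of_hall
    (hall_nbhd_of_maximal_deficiency fun W' hW' => hWmax W' (mem_powerset.2 (hW'.trans hWF)))
  refine ⟨M, hMF.trans (filter_subset _ _), ?_, hM.symm, Or.inl fun f hf hfM => ?_⟩
  · obtain ⟨f, hf, rfl⟩ := mem_image.1 (hWF hx)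
    rw [← image_nonempty (f := b), himg]
    exact ⟨b f, mem_image_of_mem b (mem_filter.2 ⟨hf, hx⟩)⟩
  · obtain ⟨m, hm, hmf⟩ := mem_image.1 hfM
    rw [himg]
    exact mem_image_of_mem b (mem_filter.2 ⟨hf, hmf ▸ (mem_filter.1 (hMF hm)).2⟩)

end Hall

section Ranking

variable (a : E → X) (b : E → Y)

noncomputable def deg (F : Finset E) (x : X) : ℕ := #{e ∈ F | a e = x}

noncomputable def above (ρ : E → ℕ) (F : Finset E) (e : E) : ℕ :=
  #{f ∈ F | a f = a e ∧ ρ e < ρ f}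

structure IsDegreeRanking (F : Finset E) (ρa ρb : E → ℕ) : Prop where
  injOn_left : Set.InjOn (fun e => (a e, ρa e)) F
  injOn_right : Set.InjOn (fun e => (b e, ρb e)) F
  above_add_above_lt :
    ∀ e ∈ F, above a ρa F e + above b ρb F e < max (deg a F (a e)) (deg b F (b e))

noncomputable def raiseOn (M F : Finset E) (ρ : E → ℕ) (e : E) : ℕ :=
  if e ∈ M then F.sup ρ + 1 else ρ e

noncomputable def lowerOn (M : Finset E) (ρ : E → ℕ) (e : E) : ℕ :=
  if e ∈ M then 0 else ρ e + 1

variable {a b} {M F : Finset E} {ρ ρa ρb : E → ℕ} {e : E}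

theorem IsDegreeRanking.swap (h : IsDegreeRanking a b F ρa ρb) : IsDegreeRanking b a F ρb ρa :=
  ⟨h.injOn_right, h.injOn_left, fun e he => by
    simpa only [add_comm, max_comm] using h.above_add_above_lt e he⟩

theorem above_lt_deg (he : e ∈ F) : above a ρ F e < deg a F (a e) :=
  card_lt_card ⟨fun f hf => mem_filter.2 ⟨(mem_filter.1 hf).1, (mem_filter.1 hf).2.1⟩, fun h => by
    simpa using (mem_filter.1 (h (mem_filter.2 ⟨he, rfl⟩))).2.2⟩

theorem deg_sdiff_add_deg (hMF : M ⊆ F) (x : X) : deg a (F \ M) x + deg a M x = deg a F x := by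
  rw [deg, deg, deg, ← card_union_of_disjoint (disjoint_filter_filter sdiff_disjoint),
    ← filter_union, sdiff_union_of_subset hMF]

theorem deg_le_one_of_injOn (hM : Set.InjOn a M) (x : X) : deg a M x ≤ 1 :=
  card_le_one.2 fun _ he _ hf => hM (mem_filter.1 he).1 (mem_filter.1 hf).1
    ((mem_filter.1 he).2.trans (mem_filter.1 hf).2.symm)

theorem deg_pos_iff {x : X} : 0 < deg a M x ↔ x ∈ M.image a := by
  simp [deg, card_pos, Finset.Nonempty]

theorem above_raiseOn_eq_zero (he : e ∈ M) : above a (raiseOn M F ρ) F e = 0 := by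
  refine card_eq_zero.2 (filter_eq_empty_iff.2 fun f hf ⟨_, hlt⟩ => ?_)
  simp only [raiseOn, he, if_true] at hlt
  split_ifs at hlt with hfM
  · exact lt_irrefl _ hlt
  · exact absurd (le_sup (f := ρ) hf) (by omega)

theorem above_raiseOn_le (he : e ∉ M) :
    above a (raiseOn M F ρ) F e ≤ above a ρ (F \ M) e + deg a M (a e) := by
  refine (card_le_card fun f hf => ?_).trans (card_union_le _ _)
  obtain ⟨hfF, hfe, hlt⟩ := mem_filter.1 hf
  by_cases hfM : f ∈ M
  · exact mem_union_right _ (mem_filter.2 ⟨hfM, hfe⟩)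
  · simp only [raiseOn, he, hfM, if_false] at hlt
    exact mem_union_left _ (mem_filter.2 ⟨mem_sdiff.2 ⟨hfF, hfM⟩, hfe, hlt⟩)

theorem above_lowerOn_le (he : e ∉ M) : above a (lowerOn M ρ) F e ≤ above a ρ (F \ M) e := by
  refine card_le_card fun f hf => ?_
  obtain ⟨hfF, hfe, hlt⟩ := mem_filter.1 hf
  by_cases hfM : f ∈ M
  · simp [lowerOn, he, hfM] at hlt
  · simp only [lowerOn, he, hfM, if_false, add_lt_add_iff_right] at hlt
    exact mem_filter.2 ⟨mem_sdiff.2 ⟨hfF, hfM⟩, hfe, hlt⟩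

theorem injOn_of_injOn_sdiff (hM : Set.InjOn a M)
    (h : Set.InjOn (fun e => (a e, ρ e)) ↑(F \ M)) (hsep : ∀ m ∈ M, ∀ f ∈ F \ M, ρ m ≠ ρ f) :
    Set.InjOn (fun e => (a e, ρ e)) F := by
  intro e he f hf hef
  obtain ⟨hae, hρe⟩ := Prod.ext_iff.1 hef
  by_cases heM : e ∈ M <;> by_cases hfM : f ∈ M
  · exact hM heM hfM hae
  · exact absurd hρe (hsep e heM f (mem_sdiff.2 ⟨hf, hfM⟩))
  · exact absurd hρe.symm (hsep f hfM e (mem_sdiff.2 ⟨he, heM⟩))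
  · exact h (mem_sdiff.2 ⟨he, heM⟩) (mem_sdiff.2 ⟨hf, hfM⟩) hef

theorem injOn_raiseOn (hM : Set.InjOn a M) (h : Set.InjOn (fun e => (a e, ρ e)) ↑(F \ M)) :
    Set.InjOn (fun e => (a e, raiseOn M F ρ e)) F := by
  refine injOn_of_injOn_sdiff hM (h.congr fun f hf => ?_) fun m hm f hf => ?_
  · simp [raiseOn, (mem_sdiff.1 hf).2]
  · have := le_sup (f := ρ) (mem_sdiff.1 hf).1
    simp only [raiseOn, hm, (mem_sdiff.1 hf).2, if_true, if_false]
    omega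

theorem injOn_lowerOn (hM : Set.InjOn a M) (h : Set.InjOn (fun e => (a e, ρ e)) ↑(F \ M)) :
    Set.InjOn (fun e => (a e, lowerOn M ρ e)) F := by
  refine injOn_of_injOn_sdiff hM (fun e he f hf hef => h he hf ?_) fun m hm f hf => ?_
  · simpa [lowerOn, (mem_sdiff.1 he).2, (mem_sdiff.1 hf).2] using hef
  · simp [lowerOn, hm, (mem_sdiff.1 hf).2]

theorem IsDegreeRanking.raiseOn_lowerOn (hMF : M ⊆ F) (hM : IsMatching a b M)
    (hcov : ∀ f ∈ F, a f ∈ M.image a → b f ∈ M.image b)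
    (h : IsDegreeRanking a b (F \ M) ρa ρb) :
    IsDegreeRanking a b F (raiseOn M F ρa) (lowerOn M ρb) := by
  refine ⟨injOn_raiseOn hM.1 h.injOn_left, injOn_lowerOn hM.2 h.injOn_right, fun e he => ?_⟩
  by_cases heM : e ∈ M
  · rw [above_raiseOn_eq_zero heM, zero_add]
    exact (above_lt_deg he).trans_le (le_max_right _ _)
  have hA := above_raiseOn_le (a := a) (F := F) (ρ := ρa) heM
  have hB := above_lowerOn_le (a := b) (F := F) (ρ := ρb) heM
  have hAB := h.above_add_above_lt e (mem_sdiff.2 ⟨he, heM⟩)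
  have hdA := deg_sdiff_add_deg (a := a) hMF (a e)
  have hdB := deg_sdiff_add_deg (a := b) hMF (b e)
  -- raising `M` adds at most one edge above `e` at `a e`, and only when both degrees at `e` drop
  have hMab : deg a M (a e) ≤ deg b M (b e) := by
    have := deg_le_one_of_injOn hM.1 (a e)
    rcases Nat.eq_zero_or_pos (deg a M (a e)) with h0 | hpos
    · omega
    · have := deg_pos_iff.2 (hcov e he (deg_pos_iff.1 hpos))
      omega
  omega

theorem exists_isDegreeRanking (a : E → X) (b : E → Y) (F : Finset E) :
    ∃ ρa ρb, IsDegreeRanking a b F ρa ρb := by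
  induction F using Finset.strongInduction with
  | H F ih =>
  rcases F.eq_empty_or_nonempty with rfl | hF
  · exact ⟨0, 0, by simp, by simp, by simp⟩
  obtain ⟨M, hMF, hMne, hM, hcov | hcov⟩ := exists_isMatching_image_closed hF
  all_goals obtain ⟨ρa, ρb, h⟩ := ih (F \ M) (sdiff_ssubset hMF hMne)
  · exact ⟨_, _, h.raiseOn_lowerOn hMF hM hcov⟩
  · exact ⟨_, _, (h.swap.raiseOn_lowerOn hMF hM.symm hcov).swap⟩

end Ranking

theorem card_filter_outranked_le (a : E → X) (b : E → Y) (ρa ρb : E → ℕ) (F : Finset E) (e : E) :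
    #{f ∈ F | Outranked a b ρa ρb e f} ≤ above a ρa F e + above b ρb F e := by
  refine (card_le_card fun f hf => ?_).trans (card_union_le {f ∈ F | a f = a e ∧ ρa e < ρa f}
    {f ∈ F | b f = b e ∧ ρb e < ρb f})
  obtain ⟨hfF, h | h⟩ := mem_filter.1 hf
  exacts [mem_union_left _ (mem_filter.2 ⟨hfF, h⟩), mem_union_right _ (mem_filter.2 ⟨hfF, h⟩)]

/-- Borodin–Kostochka–Woodall. -/
theorem exists_listColoring_of_max_deg_le [Nonempty α] (a : E → X) (b : E → Y) (F : Finset E)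
    (L : E → Finset α) (hL : ∀ e ∈ F, max (deg a F (a e)) (deg b F (b e)) ≤ #(L e)) :
    ∃ c : E → α, (∀ e ∈ F, c e ∈ L e) ∧ ∀ e ∈ F, ∀ f ∈ F, Adj a b e f → c e ≠ c f := by
  obtain ⟨ρa, ρb, hρ⟩ := exists_isDegreeRanking a b F
  refine exists_listColoring_of_isKernel (Adj a b) (Outranked a b ρa ρb) F L
    (fun G hG => exists_isKernel_outranked (hρ.injOn_left.mono hG) (hρ.injOn_right.mono hG))
    fun e he => ?_
  calc #{f ∈ F | Outranked a b ρa ρb e f} ≤ above a ρa F e + above b ρb F e :=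
        card_filter_outranked_le a b ρa ρb F e
    _ < max (deg a F (a e)) (deg b F (b e)) := hρ.above_add_above_lt e he
    _ ≤ #(L e) := hL e he

section Extension

variable (a : E → X) (b : E → Y)

noncomputable def freeColors (K : Finset α) (P : Finset E) (pre : E → α) (e : E) : Finset α :=
  {γ ∈ K | ∀ f ∈ P, Adj a b e f → pre f ≠ γ}

variable {a b}

theorem mem_freeColors {K : Finset α} {P : Finset E} {pre : E → α} {e : E} {γ : α} :
    γ ∈ freeColors a b K P pre e ↔ γ ∈ K ∧ ∀ f ∈ P, Adj a b e f → pre f ≠ γ :=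
  mem_filter

theorem Adj.symm {e f : E} (h : Adj a b e f) : Adj a b f e :=
  ⟨h.1.symm, h.2.imp Eq.symm Eq.symm⟩

theorem card_le_card_freeColors_add (K : Finset α) (P : Finset E) (pre : E → α) (e : E) :
    #K ≤ #(freeColors a b K P pre e) + (deg a P (a e) + deg b P (b e)) := by
  have hused : K \ freeColors a b K P pre e ⊆ {f ∈ P | Adj a b e f}.image pre := by
    intro γ hγ
    obtain ⟨hγK, hγ⟩ := mem_sdiff.1 hγ
    have : ¬ ∀ f ∈ P, Adj a b e f → pre f ≠ γ := fun h => hγ (mem_freeColors.2 ⟨hγK, h⟩)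
    push Not at this
    obtain ⟨f, hfP, hef, rfl⟩ := this
    exact mem_image_of_mem pre (mem_filter.2 ⟨hfP, hef⟩)
  have hadj : {f ∈ P | Adj a b e f} ⊆ {f ∈ P | a f = a e} ∪ {f ∈ P | b f = b e} := by
    intro f hf
    obtain ⟨hfP, -, h | h⟩ := mem_filter.1 hf
    exacts [mem_union_left _ (mem_filter.2 ⟨hfP, h.symm⟩),
      mem_union_right _ (mem_filter.2 ⟨hfP, h.symm⟩)]
  calc #K ≤ #(K \ freeColors a b K P pre e) + #(freeColors a b K P pre e) :=
        card_le_card_sdiff_add_card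
    _ ≤ #{f ∈ P | Adj a b e f} + #(freeColors a b K P pre e) :=
        Nat.add_le_add_right ((card_le_card hused).trans card_image_le) _
    _ ≤ _ := by
        have := (card_le_card hadj).trans (card_union_le _ _)
        rw [deg, deg]
        omega

theorem exists_extension [Fintype E] [Nonempty α] {Δ k : ℕ} {K : Finset α} (hK : Δ + k ≤ #K)
    (hΔa : ∀ x, deg a univ x ≤ Δ) (hΔb : ∀ y, deg b univ y ≤ Δ)
    (P : Finset E) (pre : E → α) (hka : ∀ x, deg a P x ≤ k) (hkb : ∀ y, deg b P y ≤ k)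
    (hpal : ∀ e ∈ P, pre e ∈ K) (hproper : ∀ e ∈ P, ∀ f ∈ P, Adj a b e f → pre e ≠ pre f) :
    ∃ c : E → α, (∀ e f, Adj a b e f → c e ≠ c f) ∧ (∀ e, c e ∈ K) ∧ ∀ e ∈ P, c e = pre e := by
  obtain ⟨c, hcL, hc⟩ := exists_listColoring_of_max_deg_le a b (univ \ P)
    (freeColors a b K P pre) fun e _ => by
      have := card_le_card_freeColors_add (a := a) (b := b) K P pre e
      have := deg_sdiff_add_deg (a := a) (subset_univ P) (a e)
      have := deg_sdiff_add_deg (a := b) (subset_univ P) (b e)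
      have := hΔa (a e); have := hΔb (b e); have := hka (a e); have := hkb (b e)
      omega
  have hcfree : ∀ e ∉ P, c e ∈ K ∧ ∀ f ∈ P, Adj a b e f → pre f ≠ c e := fun e he =>
    mem_freeColors.1 (hcL e (mem_sdiff.2 ⟨mem_univ e, he⟩))
  refine ⟨fun e => if e ∈ P then pre e else c e, fun e f hef => ?_, fun e => ?_,
    fun e he => if_pos he⟩
  · by_cases he : e ∈ P <;> by_cases hf : f ∈ P <;> simp only [he, hf, if_true, if_false]
    · exact hproper e he f hf hef
    · exact (hcfree f hf).2 e he hef.symm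
    · exact ((hcfree e he).2 f hf hef).symm
    · exact hc e (mem_sdiff.2 ⟨mem_univ e, he⟩) f (mem_sdiff.2 ⟨mem_univ f, hf⟩) hef
  · by_cases he : e ∈ P
    · simpa only [he, if_true] using hpal e he
    · simpa only [he, if_false] using (hcfree e he).1

end Extension

end BipartiteMultigraph

open BipartiteMultigraph

section Multigraph

open scoped Classical

variable {ends : E → Sym2 V}

theorem exists_ends_of_bipartite {side : V → Bool}
    (hbip : ∀ (e : E) (u v : V), ends e = s(u, v) → side u ≠ side v) :
    ∃ a b : E → V, (∀ e, ends e = s(a e, b e)) ∧ ∀ e f, a e ≠ b f := by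
  have h : ∀ e, ∃ u v, ends e = s(u, v) ∧ side u = true ∧ side v = false := by
    intro e
    obtain ⟨u, v, huv⟩ := Sym2.exists.1 ⟨ends e, rfl⟩
    have hne := hbip e u v huv
    cases hu : side u
    · exact ⟨v, u, huv.trans Sym2.eq_swap, by simpa [hu] using hne.symm, hu⟩
    · exact ⟨u, v, huv, hu, by simpa [hu] using hne.symm⟩
  choose a b hends ha hb using h
  exact ⟨a, b, hends, fun e f h => by simpa [h, hb f] using ha e⟩

theorem madj_iff_adj {a b : E → V} (hends : ∀ e, ends e = s(a e, b e))
    (hab : ∀ e f, a e ≠ b f) {e f : E} : MAdj ends e f ↔ Adj a b e f := by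
  simp only [MAdj, Adj, hends, Sym2.mem_iff]
  refine and_congr_right fun _ => ⟨?_, ?_⟩
  · rintro ⟨v, rfl | rfl, h | h⟩
    exacts [.inl h, absurd h (hab e f), absurd h.symm (hab f e), .inr h]
  · rintro (h | h)
    exacts [⟨a e, .inl rfl, .inl h⟩, ⟨b e, .inr rfl, .inr h⟩]

variable [Fintype E] {a : E → V}

theorem deg_le_ncard (ha : ∀ e, a e ∈ ends e) (T : Set E) (x : V) :
    deg a {e | e ∈ T} x ≤ {e ∈ T | x ∈ ends e}.ncard := by
  rw [deg, ← Set.ncard_coe_finset]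
  refine Set.ncard_le_ncard (fun e he => ?_) (Set.toFinite _)
  obtain ⟨heT, rfl⟩ : e ∈ T ∧ a e = x := by simpa using he
  exact ⟨heT, ha e⟩

theorem deg_univ_le_mdeg (ha : ∀ e, a e ∈ ends e) (x : V) : deg a univ x ≤ mdeg ends x := by
  simpa [mdeg] using deg_le_ncard ha Set.univ x

end Multigraph

theorem bipartite_extend_predegree_general [Fintype E] (ends : E → Sym2 V)
    (side : V → Bool)
    (hbip : ∀ (e : E) (u v : V), ends e = s(u, v) → side u ≠ side v)
    (Δ k : ℕ)
    (hΔ : IsGreatest (Set.range (mdeg ends)) Δ)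
    (S : Set E) (pre : E → ℕ)
    (hpal : ∀ e ∈ S, pre e ∈ Finset.Icc 1 (Δ + k))
    (hproper : ∀ e ∈ S, ∀ f ∈ S, MAdj ends e f → pre e ≠ pre f)
    (hpredeg : ∀ v : V, {e ∈ S | v ∈ ends e}.ncard ≤ k) :
    ∃ c : E → ℕ, MProper ends c ∧ (∀ e, c e ∈ Finset.Icc 1 (Δ + k)) ∧
      ∀ e ∈ S, c e = pre e := by
  classical
  obtain ⟨a, b, hends, hab⟩ := exists_ends_of_bipartite hbip
  have ha e : a e ∈ ends e := hends e ▸ Sym2.mem_mk_left _ _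
  have hb e : b e ∈ ends e := hends e ▸ Sym2.mem_mk_right _ _
  have hdeg {t : E → V} (ht : ∀ e, t e ∈ ends e) x : deg t univ x ≤ Δ :=
    (deg_univ_le_mdeg ht x).trans (hΔ.2 ⟨x, rfl⟩)
  have hpdeg {t : E → V} (ht : ∀ e, t e ∈ ends e) x : deg t {e | e ∈ S} x ≤ k :=
    (deg_le_ncard ht S x).trans (hpredeg x)
  obtain ⟨c, hc, hcK, hcpre⟩ := exists_extension (K := Icc 1 (Δ + k)) (by simp) (hdeg ha)
    (hdeg hb) {e | e ∈ S} pre (hpdeg ha) (hpdeg hb) (by simpa using hpal)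
    (by simpa [madj_iff_adj hends hab] using hproper)
  exact ⟨c, fun e f h => hc e f ((madj_iff_adj hends hab).1 h), hcK, by simpa using hcpre⟩

/-- Theorem 8 (bipartite multigraphs, precoloured degree at most `k`, palette `Δ + k`). -/
theorem bipartite_extend_predegree [Fintype E] (ends : E → Sym2 V)
    (hloop : ∀ e, ¬ (ends e).IsDiag)
    (side : V → Bool)
    (hbip : ∀ (e : E) (u v : V), ends e = s(u, v) → side u ≠ side v)
    (Δ k : ℕ) (hk : 1 ≤ k)
    (hΔ : IsGreatest (Set.range (mdeg ends)) Δ)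
    (S : Set E) (pre : E → ℕ)
    (hpal : ∀ e ∈ S, pre e ∈ Finset.Icc 1 (Δ + k))
    (hproper : ∀ e ∈ S, ∀ f ∈ S, MAdj ends e f → pre e ≠ pre f)
    (hpredeg : ∀ v : V, {e ∈ S | v ∈ ends e}.ncard ≤ k) :
    ∃ c : E → ℕ, MProper ends c ∧ (∀ e, c e ∈ Finset.Icc 1 (Δ + k)) ∧
      ∀ e ∈ S, c e = pre e :=
  bipartite_extend_predegree_general ends side hbip Δ k hΔ S pre hpal hproper hpredeg
end

section
/- Let G be a bipartite multigraph with maximum degree Δ. Using the palette {1, …, Δ+1}, any precoloured matching of G can be extended to a proper edge-colouring of all of G. -/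
variable {V E : Type*}

/-!
Delete the precoloured matching `M`. Every other edge `e` may still use the palette minus the
colours of the at most two edges of `M` at its ends, and such lists are handled by Galvin's kernel
method: orient the line graph by a proper labelling `ℓ` (at a common left end the smaller label
wins, at a common right end the larger one); if every list is longer than the out-degree of its
edge, a colour can be given to a kernel and the rest coloured by induction.

The labelling uses `1, …, Δ + 1`. A vertex covered by `M` has degree `< Δ` in `G - M`, so matchings
covering the left, resp. right, vertices of degree `Δ` avoid it; they get the labels `1` and
`Δ + 1`, and König's theorem labels the remaining graph of maximum degree `Δ - 1` by `2, …, Δ`. An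
edge then has out-degree at most `Δ` minus the number of its ends covered by `M`, one less than the
guaranteed length of its list.
-/

namespace Bipartite

open Finset

variable {X Y α β : Type*}

lemma card_filter_sdiff_lt [DecidableEq E] {F N : Finset E} {p : E → Prop} [DecidablePred p]
    {n : E} (hNF : N ⊆ F) (hn : n ∈ N) (hpn : p n) : #{e ∈ F \ N | p e} < #{e ∈ F | p e} := by
  refine card_lt_card ⟨filter_subset_filter _ sdiff_subset, fun h ↦ ?_⟩
  simpa [hn] using h (mem_filter.2 ⟨hNF hn, hpn⟩)

lemma card_filter_sdiff_le_pred [DecidableEq E] {Z : Type*} [DecidableEq Z] {F N : Finset E}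
    {f : E → Z} {D : ℕ} (hNF : N ⊆ F) (hF : ∀ z, #{e ∈ F | f e = z} ≤ D)
    (hN : ∀ z, #{e ∈ F | f e = z} = D → z ∈ N.image f) (z : Z) :
    #{e ∈ F \ N | f e = z} ≤ D - 1 := by
  by_cases hz : #{e ∈ F | f e = z} = D
  · obtain ⟨n, hn, rfl⟩ := mem_image.1 (hN z hz)
    have := card_filter_sdiff_lt (p := fun e ↦ f e = f n) hNF hn rfl
    omega
  · have := card_le_card (filter_subset_filter (fun e ↦ f e = z) (sdiff_subset (s := F) (t := N)))
    have := hF z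
    omega

lemma mem_image_of_card_filter_pos {Z : Type*} [DecidableEq Z] {F : Finset E} {f : E → Z} {z : Z}
    (h : 0 < #{e ∈ F | f e = z}) : z ∈ F.image f := by
  obtain ⟨e, he⟩ := card_pos.1 h
  exact mem_image.2 ⟨e, (mem_filter.1 he).1, (mem_filter.1 he).2⟩

lemma card_filter_or_le (s : Finset E) (p q : E → Prop) [DecidablePred p] [DecidablePred q] :
    #{a ∈ s | p a ∨ q a} ≤ #{a ∈ s | p a} + #{a ∈ s | q a} := by
  classical
  exact (filter_or p q s).symm ▸ card_union_le _ _

lemma card_filter_sigma_fst_eq {ι : Type*} [DecidableEq ι] {κ : ι → Type*} (s : Finset ι)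
    (t : ∀ i, Finset (κ i)) (b : ι) :
    #{p ∈ s.sigma t | p.1 = b} = if b ∈ s then #(t b) else 0 := by
  have : {p ∈ s.sigma t | p.1 = b} = {b' ∈ s | b' = b}.sigma t := by
    ext ⟨b', c⟩; simp [and_right_comm]
  simp [this, card_sigma, sum_filter]

/- A bipartite multigraph with edges `E`, given by the left and right endpoint maps. -/
variable (l : E → X) (r : E → Y)

def IsMatching (N : Finset E) : Prop :=
  Set.InjOn l N ∧ Set.InjOn r N

def IsProperOn (F : Finset E) (c : E → α) : Prop :=
  ∀ e ∈ F, ∀ f ∈ F, e ≠ f → l e = l f ∨ r e = r f → c e ≠ c f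

/-- The orientation of the line graph in Galvin's argument. -/
def Dominates [LinearOrder β] (ℓ : E → β) (f e : E) : Prop :=
  l f = l e ∧ ℓ f < ℓ e ∨ r f = r e ∧ ℓ e < ℓ f

instance [DecidableEq X] [DecidableEq Y] [LinearOrder β] (ℓ : E → β) :
    DecidableRel (Dominates l r ℓ) :=
  fun _ _ ↦ inferInstanceAs (Decidable (_ ∨ _))

def degree [DecidableEq X] [DecidableEq Y] (F : Finset E) : X ⊕ Y → ℕ :=
  Sum.elim (fun x ↦ #{e ∈ F | l e = x}) fun y ↦ #{e ∈ F | r e = y}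

/-- On the vertex set `X ⊕ Y`, used for both sides: the edges `l e — r e` and `r e — l e` for
`e ∈ F`, and `D - degree w` parallel edges `w — w` at every vertex `w` of `F`, making the graph
`D`-regular when all degrees are at most `D`. -/
def regularize [DecidableEq X] [DecidableEq Y] (F : Finset E) (D : ℕ) :
    Finset ((E ⊕ E) ⊕ (Σ _ : X ⊕ Y, ℕ)) :=
  (F.disjSum F).disjSum (((F.image l).disjSum (F.image r)).sigma fun w ↦
    range (D - degree l r F w))

def regularizeLeft : (E ⊕ E) ⊕ (Σ _ : X ⊕ Y, ℕ) → X ⊕ Y :=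
  Sum.elim (Sum.elim (.inl ∘ l) (.inr ∘ r)) Sigma.fst

def regularizeRight : (E ⊕ E) ⊕ (Σ _ : X ⊕ Y, ℕ) → X ⊕ Y :=
  Sum.elim (Sum.elim (.inr ∘ r) (.inl ∘ l)) Sigma.fst

variable {l r}

lemma IsMatching.symm {N : Finset E} (hN : IsMatching l r N) : IsMatching r l N :=
  ⟨hN.2, hN.1⟩

lemma IsMatching.isProperOn {N : Finset E} (hN : IsMatching l r N) (c : E → α) :
    IsProperOn l r N c := by
  rintro e he f hf hef (h | h) -
  exacts [hef (hN.1 he hf h), hef (hN.2 he hf h)]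

lemma IsProperOn.mono {F G : Finset E} {c : E → α} (hc : IsProperOn l r F c) (hGF : G ⊆ F) :
    IsProperOn l r G c :=
  fun e he f hf ↦ hc e (hGF he) f (hGF hf)

lemma IsProperOn.ite [DecidableEq E] {F N : Finset E} {c d : E → α} (hd : IsProperOn l r N d)
    (hc : IsProperOn l r (F \ N) c)
    (hcd : ∀ e ∈ F \ N, ∀ f ∈ N, l e = l f ∨ r e = r f → c e ≠ d f) :
    IsProperOn l r F fun e ↦ if e ∈ N then d e else c e := by
  intro e he f hf hef hshare
  by_cases heN : e ∈ N <;> by_cases hfN : f ∈ N <;> simp only [heN, hfN, if_true, if_false]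
  · exact hd e heN f hfN hef hshare
  · exact (hcd f (mem_sdiff.2 ⟨hf, hfN⟩) e heN (hshare.imp Eq.symm Eq.symm)).symm
  · exact hcd e (mem_sdiff.2 ⟨he, heN⟩) f hfN hshare
  · exact hc e (mem_sdiff.2 ⟨he, heN⟩) f (mem_sdiff.2 ⟨hf, hfN⟩) hef hshare

lemma IsMatching.card_filter_le [DecidableEq X] {M : Finset E} (hM : IsMatching l r M) (x : X) :
    #{f ∈ M | l f = x} ≤ if x ∈ M.image l then 1 else 0 := by
  split_ifs with hx
  · refine card_le_one.2 fun f hf g hg ↦ hM.1 (mem_filter.1 hf).1 (mem_filter.1 hg).1 ?_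
    exact (mem_filter.1 hf).2.trans (mem_filter.1 hg).2.symm
  · simpa [filter_eq_empty_iff] using hx

lemma eq_empty_of_degree_le_zero [DecidableEq X] {F : Finset E}
    (hl : ∀ x, #{e ∈ F | l e = x} ≤ 0) : F = ∅ :=
  eq_empty_of_forall_notMem fun e he ↦ by
    have : e ∈ {f ∈ F | l f = l e} := mem_filter.2 ⟨he, rfl⟩
    simpa using (card_pos.2 ⟨e, this⟩).trans_le (hl (l e))

section

variable [DecidableEq X] [DecidableEq Y]

/-- Edges dominating `e` at its left endpoint carry distinct labels in `[a, ℓ e)`, those at its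
right endpoint distinct labels in `(ℓ e, b]`. -/
lemma card_filter_dominates_le {F : Finset E} {ℓ : E → ℕ} (hℓ : IsProperOn l r F ℓ) {e : E}
    (he : e ∈ F) {a b : ℕ} (ha : ∀ f ∈ F, l f = l e → a ≤ ℓ f)
    (hb : ∀ f ∈ F, r f = r e → ℓ f ≤ b) :
    #{f ∈ F | Dominates l r ℓ f e} ≤ b - a := by
  have hleft : #{f ∈ F | l f = l e ∧ ℓ f < ℓ e} ≤ #(Ico a (ℓ e)) := by
    refine card_le_card_of_injOn ℓ (fun f hf ↦ ?_) fun f hf g hg hfg ↦ ?_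
    · simp only [coe_filter, Set.mem_ofPred_eq, coe_Ico, Set.mem_Ico] at hf ⊢
      exact ⟨ha f hf.1 hf.2.1, hf.2.2⟩
    · simp only [coe_filter, Set.mem_ofPred_eq] at hf hg
      by_contra hne
      exact hℓ f hf.1 g hg.1 hne (.inl (hf.2.1.trans hg.2.1.symm)) hfg
  have hright : #{f ∈ F | r f = r e ∧ ℓ e < ℓ f} ≤ #(Ioc (ℓ e) b) := by
    refine card_le_card_of_injOn ℓ (fun f hf ↦ ?_) fun f hf g hg hfg ↦ ?_
    · simp only [coe_filter, Set.mem_ofPred_eq, coe_Ioc, Set.mem_Ioc] at hf ⊢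
      exact ⟨hf.2.2, hb f hf.1 hf.2.1⟩
    · simp only [coe_filter, Set.mem_ofPred_eq] at hf hg
      by_contra hne
      exact hℓ f hf.1 g hg.1 hne (.inr (hf.2.1.trans hg.2.1.symm)) hfg
  have := ha e he rfl
  have := hb e he rfl
  calc #{f ∈ F | Dominates l r ℓ f e}
      ≤ #{f ∈ F | l f = l e ∧ ℓ f < ℓ e} + #{f ∈ F | r f = r e ∧ ℓ e < ℓ f} :=
        card_filter_or_le _ _ _
    _ ≤ (ℓ e - a) + (b - ℓ e) := by simpa using add_le_add hleft hright
    _ = b - a := by omega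

lemma degree_add_pad {F : Finset E} {D : ℕ} (hl : ∀ x, #{e ∈ F | l e = x} ≤ D)
    (hr : ∀ y, #{e ∈ F | r e = y} ≤ D) (w : X ⊕ Y) :
    #{e ∈ F | .inl (l e) = w} + #{e ∈ F | .inr (r e) = w} +
      (if w ∈ (F.image l).disjSum (F.image r) then D - degree l r F w else 0) =
      if w ∈ (F.image l).disjSum (F.image r) then D else 0 := by
  rcases w with x | y <;> split_ifs <;> simp_all [degree]

lemma card_filter_regularizeLeft {F : Finset E} {D : ℕ} (hl : ∀ x, #{e ∈ F | l e = x} ≤ D)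
    (hr : ∀ y, #{e ∈ F | r e = y} ≤ D) (w : X ⊕ Y) :
    #{a ∈ regularize l r F D | regularizeLeft l r a = w} =
      if w ∈ (F.image l).disjSum (F.image r) then D else 0 := by
  have : {a ∈ regularize l r F D | regularizeLeft l r a = w} =
      ({e ∈ F | .inl (l e) = w}.disjSum {e ∈ F | .inr (r e) = w}).disjSum
        {p ∈ ((F.image l).disjSum (F.image r)).sigma (fun w ↦ range (D - degree l r F w)) |
          p.1 = w} := by
    ext ((e | e) | p) <;> rw [mem_filter] <;> simp [regularize, regularizeLeft]
  rw [this, card_disjSum, card_disjSum, card_filter_sigma_fst_eq, card_range,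
    degree_add_pad hl hr]

lemma card_filter_regularizeRight {F : Finset E} {D : ℕ} (hl : ∀ x, #{e ∈ F | l e = x} ≤ D)
    (hr : ∀ y, #{e ∈ F | r e = y} ≤ D) (w : X ⊕ Y) :
    #{a ∈ regularize l r F D | regularizeRight l r a = w} =
      if w ∈ (F.image l).disjSum (F.image r) then D else 0 := by
  have : {a ∈ regularize l r F D | regularizeRight l r a = w} =
      ({e ∈ F | .inr (r e) = w}.disjSum {e ∈ F | .inl (l e) = w}).disjSum
        {p ∈ ((F.image l).disjSum (F.image r)).sigma (fun w ↦ range (D - degree l r F w)) |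
          p.1 = w} := by
    ext ((e | e) | p) <;> rw [mem_filter] <;> simp [regularize, regularizeRight]
  rw [this, card_disjSum, card_disjSum, card_filter_sigma_fst_eq, card_range, add_comm
    #{e ∈ F | .inr (r e) = w}, degree_add_pad hl hr]

variable [DecidableEq E]

/-- Hall's condition holds because every vertex of `S` sends at least `D` edges into its
neighbourhood, which can absorb at most `D` edges per vertex. -/
theorem exists_isMatching_image_eq {F : Finset E} {S : Finset X} {D : ℕ} (hD : 0 < D)
    (hr : ∀ y, #{e ∈ F | r e = y} ≤ D) (hS : ∀ x ∈ S, D ≤ #{e ∈ F | l e = x}) :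
    ∃ N ⊆ F, IsMatching l r N ∧ N.image l = S := by
  let nbhd : S → Finset Y := fun x ↦ {e ∈ F | l e = x}.image r
  have hall (s : Finset S) : #s ≤ #(s.biUnion nbhd) := by
    set s' := s.map (Function.Embedding.subtype _)
    have hlow : D * #s ≤ #{e ∈ F | l e ∈ s'} := calc
      D * #s = ∑ _x ∈ s', D := by simp [s', mul_comm]
      _ ≤ ∑ x ∈ s', #{e ∈ F | l e = x} := sum_le_sum fun x hx ↦ by
        obtain ⟨x, -, rfl⟩ := mem_map.1 hx
        exact hS x x.2
      _ = #{e ∈ F | l e ∈ s'} := sum_card_fiberwise_eq_card_filter _ _ _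
    have himage : {e ∈ F | l e ∈ s'}.image r = s.biUnion nbhd := by
      ext y; simp [nbhd, s']; grind
    have hup := card_le_mul_card_image {e ∈ F | l e ∈ s'} D fun y _ ↦
      (card_le_card (filter_subset_filter _ (filter_subset _ _))).trans (hr y)
    rw [himage] at hup
    exact le_of_mul_le_mul_left (hlow.trans hup) hD
  obtain ⟨g, hg, hgmem⟩ := (all_card_le_biUnion_card_iff_exists_injective nbhd).1 hall
  have hedge (x : S) : ∃ e ∈ F, l e = x ∧ r e = g x := by
    simpa [nbhd, and_assoc] using hgmem x
  choose m hmF hml hmr using hedge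
  refine ⟨S.attach.image m, image_subset_iff.2 fun x _ ↦ hmF x, ⟨fun e he e' he' h ↦ ?_,
    fun e he e' he' h ↦ ?_⟩, by ext x; simp [hml]⟩ <;>
  obtain ⟨x, -, rfl⟩ := mem_image.1 he <;> obtain ⟨x', -, rfl⟩ := mem_image.1 he'
  · exact congrArg m (Subtype.ext ((hml x).symm.trans (h.trans (hml x'))))
  · exact congrArg m (hg ((hmr x).symm.trans (h.trans (hmr x'))))

theorem exists_isMatching_mem_image_iff {F : Finset E} {D : ℕ} (hD : 0 < D)
    (hr : ∀ y, #{e ∈ F | r e = y} ≤ D) :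
    ∃ N ⊆ F, IsMatching l r N ∧ ∀ x, x ∈ N.image l ↔ #{e ∈ F | l e = x} = D := by
  obtain ⟨N, hNF, hN, hNl⟩ := exists_isMatching_image_eq (l := l) (r := r)
    (S := {x ∈ F.image l | #{e ∈ F | l e = x} = D}) hD hr fun x hx ↦ (mem_filter.1 hx).2.ge
  refine ⟨N, hNF, hN, fun x ↦ ?_⟩
  rw [hNl, mem_filter, and_iff_right_iff_imp]
  exact fun hx ↦ mem_image_of_card_filter_pos (hx ▸ hD)

/-- Hall's theorem saturates the left side of the regular graph, hence also its right side. -/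
theorem exists_isMatching_regularize {F : Finset E} {D : ℕ} (hD : 0 < D)
    (hl : ∀ x, #{e ∈ F | l e = x} ≤ D) (hr : ∀ y, #{e ∈ F | r e = y} ≤ D) :
    ∃ K ⊆ regularize l r F D, IsMatching (regularizeLeft l r) (regularizeRight l r) K ∧
      K.image (regularizeLeft l r) = (F.image l).disjSum (F.image r) ∧
      K.image (regularizeRight l r) = (F.image l).disjSum (F.image r) := by
  have hRight := card_filter_regularizeRight hl hr
  obtain ⟨K, hK, hKm, hKl⟩ := exists_isMatching_image_eq (S := (F.image l).disjSum (F.image r))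
    hD (fun w ↦ (hRight w).trans_le (by split_ifs <;> omega))
    (fun w hw ↦ (if_pos hw).symm.trans_le (card_filter_regularizeLeft hl hr w).ge)
  refine ⟨K, hK, hKm, hKl, eq_of_subset_of_card_le (image_subset_iff.2 fun a ha ↦ ?_) ?_⟩
  · by_contra hw
    have := hRight (regularizeRight l r a)
    rw [if_neg hw, card_eq_zero, filter_eq_empty_iff] at this
    exact this (hK ha) rfl
  · rw [← hKl, card_image_of_injOn hKm.1, card_image_of_injOn hKm.2]

/-- The edges of the first copy of `F` in a perfect matching of the regular graph. -/
theorem exists_isMatching_covering_maxDegree {F : Finset E} {D : ℕ} (hD : 0 < D)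
    (hl : ∀ x, #{e ∈ F | l e = x} ≤ D) (hr : ∀ y, #{e ∈ F | r e = y} ≤ D) :
    ∃ N ⊆ F, IsMatching l r N ∧ (∀ x, #{e ∈ F | l e = x} = D → x ∈ N.image l) ∧
      ∀ y, #{e ∈ F | r e = y} = D → y ∈ N.image r := by
  obtain ⟨K, hK, hKm, hKl, hKr⟩ := exists_isMatching_regularize hD hl hr
  refine ⟨{e ∈ F | .inl (.inl e) ∈ K}, filter_subset _ _, ⟨fun e he e' he' h ↦ ?_,
    fun e he e' he' h ↦ ?_⟩, fun x hx ↦ ?_, fun y hy ↦ ?_⟩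
  · simpa using hKm.1 (mem_filter.1 he).2 (mem_filter.1 he').2 (by simp [regularizeLeft, h])
  · simpa using hKm.2 (mem_filter.1 he).2 (mem_filter.1 he').2 (by simp [regularizeRight, h])
  · obtain ⟨a, ha, hax⟩ := mem_image.1 (hKl ▸ inl_mem_disjSum.2
      (mem_image_of_card_filter_pos (hx ▸ hD)) : .inl x ∈ K.image (regularizeLeft l r))
    rcases a with (e | e) | ⟨w, i⟩
    · refine mem_image.2 ⟨e, mem_filter.2 ⟨?_, ha⟩, by simpa [regularizeLeft] using hax⟩
      simpa [regularize] using hK ha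
    · simp [regularizeLeft] at hax
    · obtain rfl : w = .inl x := hax
      simpa [regularize, degree, hx] using hK ha
  · obtain ⟨a, ha, hay⟩ := mem_image.1 (hKr ▸ inr_mem_disjSum.2
      (mem_image_of_card_filter_pos (hy ▸ hD)) : .inr y ∈ K.image (regularizeRight l r))
    rcases a with (e | e) | ⟨w, i⟩
    · refine mem_image.2 ⟨e, mem_filter.2 ⟨?_, ha⟩, by simpa [regularizeRight] using hay⟩
      simpa [regularize] using hK ha
    · simp [regularizeRight] at hay
    · obtain rfl : w = .inr y := hay
      simpa [regularize, degree, hy] using hK ha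

theorem exists_isProperOn_of_degree_le_card [Nonempty α] {F : Finset E} {C : Finset α}
    (hl : ∀ x, #{e ∈ F | l e = x} ≤ #C) (hr : ∀ y, #{e ∈ F | r e = y} ≤ #C) :
    ∃ c : E → α, (∀ e ∈ F, c e ∈ C) ∧ IsProperOn l r F c := by
  classical
  induction C using Finset.strongInduction generalizing F with
  | H C ih =>
  obtain rfl | ⟨q, hq⟩ := C.eq_empty_or_nonempty
  · obtain rfl := eq_empty_of_degree_le_zero hl
    exact ⟨fun _ ↦ Classical.arbitrary α, by simp, by simp [IsProperOn]⟩
  obtain ⟨N, hNF, hN, hNl, hNr⟩ := exists_isMatching_covering_maxDegree (card_pos.2 ⟨q, hq⟩) hl hr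
  have hcard : #(C.erase q) = #C - 1 := card_erase_of_mem hq
  obtain ⟨c, hcC, hc⟩ := ih (C.erase q) (erase_ssubset hq) (F := F \ N)
    (hcard ▸ card_filter_sdiff_le_pred hNF hl hNl) (hcard ▸ card_filter_sdiff_le_pred hNF hr hNr)
  refine ⟨fun e ↦ if e ∈ N then q else c e, fun e he ↦ ?_,
    (hN.isProperOn _).ite hc fun e he _ _ _ ↦ (mem_erase.1 (hcC e he)).1⟩
  dsimp only
  split_ifs with heN
  exacts [hq, mem_of_mem_erase (hcC e (mem_sdiff.2 ⟨he, heN⟩))]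

/-- A kernel of the domination digraph, i.e. a stable matching for the preferences given by `ℓ`
(Gale–Shapley). -/
theorem exists_kernel [LinearOrder β] {ℓ : E → β} {F : Finset E} (hℓ : IsProperOn l r F ℓ) :
    ∃ K ⊆ F, IsMatching l r K ∧ ∀ e ∈ F \ K, ∃ f ∈ K, Dominates l r ℓ f e := by
  induction F using Finset.strongInduction with
  | H F ih =>
  let T := {e ∈ F | ∀ f ∈ F, r f = r e → ℓ f ≤ ℓ e}
  by_cases hA : ∃ e ∈ T, ∃ g ∈ F, l g = l e ∧ ℓ e < ℓ g
  · -- `e` is the favourite of its right endpoint, so its left endpoint can discard every worse edge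
    obtain ⟨e, heT, g, hgF, hgl, hlt⟩ := hA
    obtain ⟨heF, hetop⟩ := mem_filter.1 heT
    let F' := {x ∈ F | ¬(l x = l e ∧ ℓ e < ℓ x)}
    have hF' : F' ⊂ F := filter_ssubset.2 ⟨g, hgF, by simp [hgl, hlt]⟩
    obtain ⟨K, hKF', hK, habs⟩ := ih F' hF' (hℓ.mono (filter_subset _ _))
    have heF' : e ∈ F' := mem_filter.2 ⟨heF, by simp⟩
    obtain ⟨h, hhK, hhl, hhle⟩ : ∃ h ∈ K, l h = l e ∧ ℓ h ≤ ℓ e := by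
      by_cases heK : e ∈ K
      · exact ⟨e, heK, rfl, le_rfl⟩
      obtain ⟨f, hfK, (⟨hfl, hflt⟩ | ⟨hfr, hflt⟩)⟩ := habs e (mem_sdiff.2 ⟨heF', heK⟩)
      · exact ⟨f, hfK, hfl, hflt.le⟩
      · exact absurd (hetop f (filter_subset _ _ (hKF' hfK)) hfr) (not_le.2 hflt)
    refine ⟨K, hKF'.trans (filter_subset _ _), hK, fun x hx ↦ ?_⟩
    obtain ⟨hxF, hxK⟩ := mem_sdiff.1 hx
    by_cases hxF' : x ∈ F'
    · exact habs x (mem_sdiff.2 ⟨hxF', hxK⟩)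
    · obtain ⟨hxl, hxlt⟩ : l x = l e ∧ ℓ e < ℓ x := by simpa [F', hxF] using hxF'
      exact ⟨h, hhK, .inl ⟨hhl.trans hxl.symm, hhle.trans_lt hxlt⟩⟩
  · -- otherwise each favourite of a right endpoint has the largest label at its left endpoint,
    -- so these favourites form a matching, and they dominate all other edges
    push Not at hA
    refine ⟨T, filter_subset _ _, ⟨fun e he e' he' hl ↦ ?_, fun e he e' he' hr ↦ ?_⟩, fun x hx ↦ ?_⟩
    · by_contra hne
      have hF := (mem_filter.1 he).1
      have hF' := (mem_filter.1 he').1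
      rcases (hℓ e hF e' hF' hne (.inl hl)).lt_or_gt with h | h
      · exact (hA e he e' hF' hl.symm).not_gt h
      · exact (hA e' he' e hF hl).not_gt h
    · by_contra hne
      have hle := (mem_filter.1 he).2 e' (mem_filter.1 he').1 hr.symm
      have hge := (mem_filter.1 he').2 e (mem_filter.1 he).1 hr
      exact hℓ e (mem_filter.1 he).1 e' (mem_filter.1 he').1 hne (.inr hr) (le_antisymm hge hle)
    · obtain ⟨hxF, hxT⟩ := mem_sdiff.1 hx
      obtain ⟨f, hf, hfmax⟩ := exists_max_image {f ∈ F | r f = r x} ℓ ⟨x, mem_filter.2 ⟨hxF, rfl⟩⟩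
      obtain ⟨hfF, hfr⟩ := mem_filter.1 hf
      have hfT : f ∈ T :=
        mem_filter.2 ⟨hfF, fun g hg hgr ↦ hfmax g (mem_filter.2 ⟨hg, hgr.trans hfr⟩)⟩
      obtain ⟨g, hg, hgr, hlt⟩ : ∃ g ∈ F, r g = r x ∧ ℓ x < ℓ g := by
        simpa [T, hxF] using hxT
      exact ⟨f, hfT, .inr ⟨hfr, hlt.trans_le (hfmax g (mem_filter.2 ⟨hg, hgr⟩))⟩⟩

/-- Galvin's kernel method: colour a kernel of the edges whose lists contain a colour `p` with `p`;
every other such edge loses `p` from its list but also loses a dominating edge. -/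
theorem exists_isProperOn_mem_of_card_dominates_lt [Nonempty α] [LinearOrder β] {ℓ : E → β}
    {F : Finset E} (hℓ : IsProperOn l r F ℓ) (L : E → Finset α)
    (hL : ∀ e ∈ F, #{f ∈ F | Dominates l r ℓ f e} < #(L e)) :
    ∃ c : E → α, (∀ e ∈ F, c e ∈ L e) ∧ IsProperOn l r F c := by
  classical
  induction F using Finset.strongInduction generalizing L with
  | H F ih =>
  obtain rfl | ⟨e₀, he₀⟩ := F.eq_empty_or_nonempty
  · exact ⟨fun _ ↦ Classical.arbitrary α, by simp, by simp [IsProperOn]⟩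
  obtain ⟨p, hp⟩ := card_pos.1 ((Nat.zero_le _).trans_lt (hL e₀ he₀))
  let Fp := {e ∈ F | p ∈ L e}
  obtain ⟨K, hKFp, hK, habs⟩ := exists_kernel (hℓ.mono (filter_subset _ (s := F)) (G := Fp))
  have hKF : K ⊆ F := hKFp.trans (filter_subset _ _)
  have hK₀ : K.Nonempty := by
    by_contra hKe
    rw [not_nonempty_iff_eq_empty] at hKe
    obtain ⟨f, hf, -⟩ := habs e₀ (by simp [Fp, hKe, he₀, hp])
    simp [hKe] at hf
  have hss : F \ K ⊂ F := sdiff_ssubset hKF hK₀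
  have hL' : ∀ e ∈ F \ K, #{f ∈ F \ K | Dominates l r ℓ f e} < #((L e).erase p) := by
    intro e he
    obtain ⟨heF, heK⟩ := mem_sdiff.1 he
    by_cases hpe : p ∈ L e
    · obtain ⟨k, hkK, hk⟩ := habs e (mem_sdiff.2 ⟨mem_filter.2 ⟨heF, hpe⟩, heK⟩)
      have := card_filter_sdiff_lt (p := fun f ↦ Dominates l r ℓ f e) hKF hkK hk
      have := hL e heF
      rw [card_erase_of_mem hpe]
      omega
    · rw [erase_eq_of_notMem hpe]
      exact (card_le_card (filter_subset_filter _ sdiff_subset)).trans_lt (hL e heF)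
  obtain ⟨c, hcL, hc⟩ := ih (F \ K) hss (hℓ.mono sdiff_subset) (fun e ↦ (L e).erase p) hL'
  refine ⟨fun e ↦ if e ∈ K then p else c e, fun e he ↦ ?_,
    (hK.isProperOn _).ite hc fun e he _ _ _ ↦ (mem_erase.1 (hcL e he)).1⟩
  dsimp only
  split_ifs with heK
  exacts [(mem_filter.1 (hKFp heK)).2, mem_of_mem_erase (hcL e (mem_sdiff.2 ⟨he, heK⟩))]

theorem exists_isProperOn_labelling {F : Finset E} {Δ : ℕ} (hl : ∀ x, #{e ∈ F | l e = x} ≤ Δ)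
    (hr : ∀ y, #{e ∈ F | r e = y} ≤ Δ) {A : Finset X} {B : Finset Y}
    (hA : ∀ x ∈ A, #{e ∈ F | l e = x} < Δ) (hB : ∀ y ∈ B, #{e ∈ F | r e = y} < Δ) :
    ∃ ℓ : E → ℕ, IsProperOn l r F ℓ ∧
      ∀ e ∈ F, (if l e ∈ A then 2 else 1) ≤ ℓ e ∧ ℓ e ≤ if r e ∈ B then Δ else Δ + 1 := by
  obtain rfl | hΔ := Nat.eq_zero_or_pos Δ
  · obtain rfl := eq_empty_of_degree_le_zero hl
    exact ⟨fun _ ↦ 0, by simp [IsProperOn], by simp⟩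
  obtain ⟨N₁, hN₁F, hN₁, hN₁l⟩ := exists_isMatching_mem_image_iff (l := l) (r := r) hΔ hr
  obtain ⟨N₂, hN₂F, hN₂, hN₂r⟩ := exists_isMatching_mem_image_iff (l := r) (r := l) hΔ hl
  have hcard : #(Icc 2 Δ) = Δ - 1 := by simp
  obtain ⟨c, hcC, hc⟩ := exists_isProperOn_of_degree_le_card
    (F := (F \ N₁) \ N₂) (C := Icc 2 Δ) (l := l) (r := r)
    (fun x ↦ hcard ▸ (card_le_card (filter_subset_filter _ sdiff_subset)).trans
      (card_filter_sdiff_le_pred hN₁F hl (fun x ↦ (hN₁l x).2) x))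
    (fun y ↦ hcard ▸ (card_le_card (filter_subset_filter _ (sdiff_subset_sdiff
      sdiff_subset le_rfl))).trans (card_filter_sdiff_le_pred hN₂F hr (fun y ↦ (hN₂r y).2) y))
  have hc2 (e) (he : e ∈ (F \ N₁) \ N₂) : 2 ≤ c e ∧ c e ≤ Δ := mem_Icc.1 (hcC e he)
  refine ⟨fun e ↦ if e ∈ N₁ then 1 else if e ∈ N₂ then Δ + 1 else c e,
    (hN₁.isProperOn _).ite ((hN₂.symm.isProperOn _).ite hc fun e he _ _ _ ↦ ?_) fun e he _ _ _ ↦ ?_,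
    fun e he ↦ ?_⟩
  · have := hc2 e he; omega
  · split_ifs with he₂
    · omega
    · have := hc2 e (mem_sdiff.2 ⟨he, he₂⟩); omega
  · dsimp only
    by_cases he₁ : e ∈ N₁
    · have hlA : l e ∉ A := fun h ↦ (hA _ h).ne ((hN₁l _).1 (mem_image_of_mem l he₁))
      simp only [he₁, hlA, if_true, if_false]
      split_ifs <;> omega
    by_cases he₂ : e ∈ N₂
    · have hrB : r e ∉ B := fun h ↦ (hB _ h).ne ((hN₂r _).1 (mem_image_of_mem r he₂))
      simp only [he₁, he₂, hrB, if_true, if_false]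
      split_ifs <;> omega
    · have := hc2 e (mem_sdiff.2 ⟨mem_sdiff.2 ⟨he, he₁⟩, he₂⟩)
      simp only [he₁, he₂, if_false]
      split_ifs <;> omega

theorem exists_isProperOn_extend_isMatching {F M : Finset E} {Δ : ℕ} (hMF : M ⊆ F)
    (hM : IsMatching l r M) (hl : ∀ x, #{e ∈ F | l e = x} ≤ Δ) (hr : ∀ y, #{e ∈ F | r e = y} ≤ Δ)
    {P : Finset α} (hP : Δ + 1 ≤ #P) {pre : E → α} (hpre : ∀ e ∈ M, pre e ∈ P) :
    ∃ c : E → α, (∀ e ∈ F, c e ∈ P) ∧ IsProperOn l r F c ∧ ∀ e ∈ M, c e = pre e := by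
  classical
  have : Nonempty α := (card_pos.1 (by omega : 0 < #P)).to_type
  have hsub (p : E → Prop) [DecidablePred p] : #{e ∈ F \ M | p e} ≤ #{e ∈ F | p e} :=
    card_le_card (filter_subset_filter _ sdiff_subset)
  obtain ⟨ℓ, hℓ, hℓbd⟩ := exists_isProperOn_labelling (l := l) (r := r) (F := F \ M)
    (A := M.image l) (B := M.image r)
    (fun x ↦ (hsub _).trans (hl x)) (fun y ↦ (hsub _).trans (hr y))
    (fun x hx ↦ by
      obtain ⟨m, hm, rfl⟩ := mem_image.1 hx
      exact (card_filter_sdiff_lt (p := fun e ↦ l e = l m) hMF hm rfl).trans_le (hl _))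
    (fun y hy ↦ by
      obtain ⟨m, hm, rfl⟩ := mem_image.1 hy
      exact (card_filter_sdiff_lt (p := fun e ↦ r e = r m) hMF hm rfl).trans_le (hr _))
  let L (e : E) : Finset α := P \ {f ∈ M | l f = l e ∨ r f = r e}.image pre
  have hL (e) (he : e ∈ F \ M) : #{f ∈ F \ M | Dominates l r ℓ f e} < #(L e) := by
    have hout := card_filter_dominates_le hℓ he (fun f hf hfe ↦ hfe ▸ (hℓbd f hf).1)
      (fun f hf hfe ↦ hfe ▸ (hℓbd f hf).2)
    have hpre : #({f ∈ M | l f = l e ∨ r f = r e}.image pre) ≤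
        (if l e ∈ M.image l then 1 else 0) + if r e ∈ M.image r then 1 else 0 :=
      (card_image_le.trans (card_filter_or_le M _ _)).trans
        (add_le_add (hM.card_filter_le (l e)) (hM.symm.card_filter_le (r e)))
    have hlist := le_card_sdiff ({f ∈ M | l f = l e ∨ r f = r e}.image pre) P
    have hℓe := hℓbd e he
    simp only [L]
    split_ifs at hout hpre hℓe <;> omega
  obtain ⟨c, hcL, hc⟩ := exists_isProperOn_mem_of_card_dominates_lt hℓ L hL
  refine ⟨fun e ↦ if e ∈ M then pre e else c e, fun e he ↦ ?_,
    (hM.isProperOn pre).ite hc fun e he f hf hef ↦ ?_, fun e he ↦ if_pos he⟩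
  · dsimp only
    split_ifs with heM
    exacts [hpre e heM, (mem_sdiff.1 (hcL e (mem_sdiff.2 ⟨he, heM⟩))).1]
  · have := (mem_sdiff.1 (hcL e he)).2
    contrapose! this
    exact mem_image.2 ⟨f, mem_filter.2 ⟨hf, hef.imp Eq.symm Eq.symm⟩, this.symm⟩

end

lemma exists_ends_eq_of_side_ne {ends : E → Sym2 V} {side : V → Bool}
    (hbip : ∀ (e : E) (u v : V), ends e = s(u, v) → side u ≠ side v) :
    ∃ l r : E → V, ∀ e, ends e = s(l e, r e) ∧ side (l e) = true ∧ side (r e) = false := by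
  have (e : E) : ∃ u v, ends e = s(u, v) ∧ side u = true ∧ side v = false := by
    obtain ⟨⟨u, v⟩, huv⟩ := Quot.exists_rep (ends e)
    have hne := hbip e u v huv.symm
    cases hu : side u
    · exact ⟨v, u, huv.symm.trans Sym2.eq_swap, by simpa [hu] using hne.symm, hu⟩
    · exact ⟨u, v, huv.symm, hu, by simpa [hu] using hne.symm⟩
  choose l r h using this
  exact ⟨l, r, h⟩

lemma mAdj_iff {ends : E → Sym2 V} {side : V → Bool} {l r : E → V}
    (h : ∀ e, ends e = s(l e, r e) ∧ side (l e) = true ∧ side (r e) = false) {e f : E} :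
    MAdj ends e f ↔ e ≠ f ∧ (l e = l f ∨ r e = r f) := by
  have hlr (e f : E) : l e ≠ r f := fun hef ↦ by simpa [hef, (h f).2.2] using (h e).2.1
  simp only [MAdj, (h e).1, (h f).1, Sym2.mem_iff]
  constructor
  · rintro ⟨hne, v, rfl | rfl, hvf | hvf⟩
    exacts [⟨hne, .inl hvf⟩, (hlr _ _ hvf).elim, (hlr _ _ hvf.symm).elim, ⟨hne, .inr hvf⟩]
  · rintro ⟨hne, hef | hef⟩
    exacts [⟨hne, l e, .inl rfl, .inl hef⟩, ⟨hne, r e, .inr rfl, .inr hef⟩]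

lemma card_filter_le_mdeg [Fintype E] [DecidableEq V] {ends : E → Sym2 V} {g : E → V}
    (hg : ∀ e, g e ∈ ends e) (v : V) : #{e | g e = v} ≤ mdeg ends v := by
  rw [mdeg, ← Set.ncard_coe_finset]
  refine Set.ncard_le_ncard fun e he ↦ ?_
  rw [coe_filter, Set.mem_ofPred_eq] at he
  exact he.2 ▸ hg e

end Bipartite

open Finset Bipartite

theorem bipartite_extend_matching_general [Fintype E] (ends : E → Sym2 V)
    (side : V → Bool)
    (hbip : ∀ (e : E) (u v : V), ends e = s(u, v) → side u ≠ side v)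
    (Δ : ℕ) (hΔ : IsGreatest (Set.range (mdeg ends)) Δ)
    (M : Set E) (hM : ∀ e ∈ M, ∀ f ∈ M, ¬ MAdj ends e f)
    (pre : E → ℕ) (hpal : ∀ e ∈ M, pre e ∈ Finset.Icc 1 (Δ + 1)) :
    ∃ c : E → ℕ, MProper ends c ∧ (∀ e, c e ∈ Finset.Icc 1 (Δ + 1)) ∧
      ∀ e ∈ M, c e = pre e := by
  classical
  obtain ⟨l, r, hlr⟩ := exists_ends_eq_of_side_ne hbip
  have hdeg {g : E → V} (hg : ∀ e, g e ∈ ends e) (v : V) : #{e | g e = v} ≤ Δ :=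
    (card_filter_le_mdeg hg v).trans (hΔ.2 ⟨v, rfl⟩)
  have hmatch : IsMatching l r M.toFinset := by
    refine ⟨fun e he f hf hef ↦ ?_, fun e he f hf hef ↦ ?_⟩ <;> by_contra hne <;>
      simp only [Set.coe_toFinset] at he hf
    exacts [hM e he f hf ((mAdj_iff hlr).2 ⟨hne, .inl hef⟩),
      hM e he f hf ((mAdj_iff hlr).2 ⟨hne, .inr hef⟩)]
  obtain ⟨c, hcP, hc, hcpre⟩ := exists_isProperOn_extend_isMatching (F := univ) (subset_univ _)
    hmatch (hdeg fun e ↦ by simp [(hlr e).1]) (hdeg fun e ↦ by simp [(hlr e).1])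
    (P := Icc 1 (Δ + 1)) (by simp) fun e he ↦ hpal e (Set.mem_toFinset.1 he)
  refine ⟨c, fun e f hef ↦ ?_, fun e ↦ hcP e (mem_univ e), fun e he ↦ hcpre e (by simpa)⟩
  obtain ⟨hne, hshare⟩ := (mAdj_iff hlr).1 hef
  exact hc e (mem_univ e) f (mem_univ f) hne hshare

/-- Theorem 4: in a bipartite multigraph of maximum degree `Δ`, any precoloured matching
extends to a proper edge-colouring with palette `{1, …, Δ + 1}`. -/
theorem bipartite_extend_matching [Fintype E] (ends : E → Sym2 V)
    (hloop : ∀ e, ¬ (ends e).IsDiag)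
    (side : V → Bool)
    (hbip : ∀ (e : E) (u v : V), ends e = s(u, v) → side u ≠ side v)
    (Δ : ℕ) (hΔ : IsGreatest (Set.range (mdeg ends)) Δ)
    (M : Set E) (hM : ∀ e ∈ M, ∀ f ∈ M, ¬ MAdj ends e f)
    (pre : E → ℕ) (hpal : ∀ e ∈ M, pre e ∈ Finset.Icc 1 (Δ + 1)) :
    ∃ c : E → ℕ, MProper ends c ∧ (∀ e, c e ∈ Finset.Icc 1 (Δ + 1)) ∧
      ∀ e ∈ M, c e = pre e :=
  bipartite_extend_matching_general ends side hbip Δ hΔ M hM pre hpal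
end

section
/- Let G be a multigraph with maximum degree at most 3. Using the palette {1,2,3,4}, any precoloured matching can be extended to a proper edge-colouring of all of G. -/
variable {V E : Type*}

section Aux

open Finset

/-- The palette `{1,2,3,4}`. -/
private def PP : Finset ℕ := Finset.Icc 1 4

private lemma PP_card : PP.card = 4 := by
  rw [PP, Nat.card_Icc]

/-- Edges incident to a vertex. -/
private noncomputable def edgesAt [Fintype E] (ends : E → Sym2 V) (v : V) : Finset E :=
  @Finset.filter E (fun e => v ∈ ends e) (Classical.decPred _) Finset.univ

private lemma mem_edgesAt [Fintype E] {ends : E → Sym2 V} {v : V} {e : E} :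
    e ∈ edgesAt ends v ↔ v ∈ ends e := by
  unfold edgesAt
  exact (@Finset.mem_filter E (fun e => v ∈ ends e) (Classical.decPred _) Finset.univ e).trans
    ⟨fun hh => hh.2, fun hh => ⟨Finset.mem_univ e, hh⟩⟩

private lemma card_edgesAt_le [Fintype E] {ends : E → Sym2 V}
    (hdeg : ∀ v : V, mdeg ends v ≤ 3) (v : V) : (edgesAt ends v).card ≤ 3 := by
  have h1 : {e : E | v ∈ ends e} = ↑(edgesAt ends v) := by
    ext e; simp [mem_edgesAt]
  have h2 := hdeg v
  rwa [mdeg, h1, Set.ncard_coe_finset] at h2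

/-- Colours appearing on coloured (i.e. not in `W`) edges at `v`. -/
private noncomputable def colsAt [Fintype E] [DecidableEq E] (ends : E → Sym2 V)
    (c : E → ℕ) (W : Finset E) (v : V) : Finset ℕ :=
  (edgesAt ends v \ W).image c

private lemma mem_colsAt_of [Fintype E] [DecidableEq E] {ends : E → Sym2 V}
    {c : E → ℕ} {W : Finset E} {v : V} {e : E} (he : v ∈ ends e) (hW : e ∉ W) :
    c e ∈ colsAt ends c W v :=
  Finset.mem_image_of_mem c (Finset.mem_sdiff.mpr ⟨mem_edgesAt.mpr he, hW⟩)

private lemma mem_colsAt_iff [Fintype E] [DecidableEq E] {ends : E → Sym2 V}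
    {c : E → ℕ} {W : Finset E} {v : V} {k : ℕ} :
    k ∈ colsAt ends c W v ↔ ∃ e, v ∈ ends e ∧ e ∉ W ∧ c e = k := by
  unfold colsAt
  simp only [Finset.mem_image, Finset.mem_sdiff, mem_edgesAt]
  constructor
  · rintro ⟨e, ⟨h1, h2⟩, h3⟩; exact ⟨e, h1, h2, h3⟩
  · rintro ⟨e, h1, h2, h3⟩; exact ⟨e, ⟨h1, h2⟩, h3⟩

/-- Free colours at `v`. -/
private noncomputable def fre [Fintype E] [DecidableEq E] (ends : E → Sym2 V)
    (c : E → ℕ) (W : Finset E) (v : V) : Finset ℕ :=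
  PP \ colsAt ends c W v

private lemma fre_subset_PP [Fintype E] [DecidableEq E] {ends : E → Sym2 V}
    {c : E → ℕ} {W : Finset E} {v : V} : fre ends c W v ⊆ PP :=
  Finset.sdiff_subset

private lemma not_cols_of_fre [Fintype E] [DecidableEq E] {ends : E → Sym2 V}
    {c : E → ℕ} {W : Finset E} {v : V} {k : ℕ} (h : k ∈ fre ends c W v) :
    k ∉ colsAt ends c W v := (Finset.mem_sdiff.mp h).2

/-- Partial-colouring goodness: proper and palette-respecting outside `W`,
and agreeing with the precolouring on `M`. -/
private def GoodC [Fintype E] (ends : E → Sym2 V) (M : Set E) (pre : E → ℕ)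
    (c : E → ℕ) (W : Finset E) : Prop :=
  (∀ e f : E, e ∉ W → f ∉ W → MAdj ends e f → c e ≠ c f) ∧
  (∀ e : E, e ∉ W → c e ∈ PP) ∧ (∀ e ∈ M, c e = pre e)

private lemma cols_subset_PP [Fintype E] [DecidableEq E] {ends : E → Sym2 V}
    {M : Set E} {pre c : E → ℕ} {W : Finset E}
    (hgood : GoodC ends M pre c W) (v : V) : colsAt ends c W v ⊆ PP := by
  intro k hk
  obtain ⟨e, _, h2, h3⟩ := mem_colsAt_iff.mp hk
  exact h3 ▸ hgood.2.1 e h2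

private lemma cols_card_le [Fintype E] [DecidableEq E] {ends : E → Sym2 V}
    (hdeg : ∀ v : V, mdeg ends v ≤ 3) {c : E → ℕ} {W : Finset E} {v : V} {h : E}
    (hhv : v ∈ ends h) (hhW : h ∈ W) : (colsAt ends c W v).card ≤ 2 := by
  have h1 : edgesAt ends v \ W ⊆ (edgesAt ends v).erase h := by
    intro e he
    rcases Finset.mem_sdiff.mp he with ⟨he1, he2⟩
    exact Finset.mem_erase.mpr ⟨fun hh => he2 (hh ▸ hhW), he1⟩
  calc (colsAt ends c W v).card ≤ (edgesAt ends v \ W).card := Finset.card_image_le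
    _ ≤ ((edgesAt ends v).erase h).card := Finset.card_le_card h1
    _ = (edgesAt ends v).card - 1 := Finset.card_erase_of_mem (mem_edgesAt.mpr hhv)
    _ ≤ 2 := by have := card_edgesAt_le hdeg v; omega

private lemma fre_card_ge [Fintype E] [DecidableEq E] {ends : E → Sym2 V}
    (hdeg : ∀ v : V, mdeg ends v ≤ 3) {c : E → ℕ} {W : Finset E} {v : V} {h : E}
    (hhv : v ∈ ends h) (hhW : h ∈ W) : 2 ≤ (fre ends c W v).card := by
  have h1 := cols_card_le (c := c) hdeg hhv hhW
  have h2 := Finset.le_card_sdiff (colsAt ends c W v) PP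
  rw [PP_card] at h2
  unfold fre
  omega

/-- In a stuck configuration the free sets at the two ends of the hole partition the
palette, and the colours at `b` are exactly the free colours at `a`. -/
private lemma stuck_struct [Fintype E] [DecidableEq E] {ends : E → Sym2 V}
    {M : Set E} {pre c : E → ℕ} {W : Finset E} {h : E} {a b : V}
    (hdeg : ∀ v : V, mdeg ends v ≤ 3)
    (hab : a ∈ ends h) (hbb : b ∈ ends h)
    (hgood : GoodC ends M pre c (insert h W))
    (hstuck : fre ends c (insert h W) a ∩ fre ends c (insert h W) b = ∅) :
    (fre ends c (insert h W) a).card = 2 ∧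
    fre ends c (insert h W) b = PP \ fre ends c (insert h W) a ∧
    colsAt ends c (insert h W) b = fre ends c (insert h W) a := by
  set Sa := fre ends c (insert h W) a with hSa
  set Sb := fre ends c (insert h W) b with hSb
  have hma : 2 ≤ Sa.card := fre_card_ge hdeg hab (Finset.mem_insert_self h W)
  have hmb : 2 ≤ Sb.card := fre_card_ge hdeg hbb (Finset.mem_insert_self h W)
  have hdisj : Disjoint Sa Sb := Finset.disjoint_iff_inter_eq_empty.mpr hstuck
  have hsub : Sa ∪ Sb ⊆ PP := Finset.union_subset fre_subset_PP fre_subset_PP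
  have hcard : Sa.card + Sb.card ≤ 4 := by
    rw [← Finset.card_union_of_disjoint hdisj]
    calc (Sa ∪ Sb).card ≤ PP.card := Finset.card_le_card hsub
      _ = 4 := PP_card
  have hca : Sa.card = 2 := by omega
  have hcb : Sb.card = 2 := by omega
  have hbsub : Sb ⊆ PP \ Sa := by
    intro k hk
    refine Finset.mem_sdiff.mpr ⟨fre_subset_PP hk, fun hk2 => ?_⟩
    exact Finset.notMem_empty k (hstuck ▸ Finset.mem_inter.mpr ⟨hk2, hk⟩)
  have hPPa : (PP \ Sa).card = 2 := by
    rw [Finset.card_sdiff_of_subset fre_subset_PP, PP_card, hca]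
  have hbeq : Sb = PP \ Sa := Finset.eq_of_subset_of_card_le hbsub (by omega)
  refine ⟨hca, hbeq, ?_⟩
  -- colsAt b = PP \ Sb = Sa
  have hc1 : colsAt ends c (insert h W) b = PP \ Sb := by
    rw [hSb]
    unfold fre
    rw [Finset.sdiff_sdiff_eq_self (cols_subset_PP hgood b)]
  rw [hc1, hbeq, Finset.sdiff_sdiff_eq_self fre_subset_PP]

/-- From a stuck configuration, a pivot edge exists: a coloured non-matching edge at `b`
whose colour is free at `a`. -/
private lemma pivot_exists [Fintype E] [DecidableEq E] {ends : E → Sym2 V}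
    {M : Set E} {c : E → ℕ} {W : Finset E} {h : E} {a b : V}
    (hloop : ∀ e, ¬ (ends e).IsDiag)
    (hM : ∀ e ∈ M, ∀ f ∈ M, ¬ MAdj ends e f)
    (hcols : colsAt ends c (insert h W) b = fre ends c (insert h W) a)
    (hcard : (fre ends c (insert h W) a).card = 2) :
    ∃ g w, g ∉ M ∧ g ∉ insert h W ∧ ends g = s(b, w) ∧ w ≠ b ∧
      c g ∈ fre ends c (insert h W) a := by
  have h2 : 2 ≤ (edgesAt ends b \ insert h W).card := by
    have h3 : (colsAt ends c (insert h W) b).card ≤ (edgesAt ends b \ insert h W).card :=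
      Finset.card_image_le
    have hc : (colsAt ends c (insert h W) b).card = 2 := by rw [hcols, hcard]
    omega
  have h2' : 1 < (edgesAt ends b \ insert h W).card := by omega
  obtain ⟨g1, hg1, g2, hg2, hne⟩ := Finset.one_lt_card.mp h2'
  have key : ∀ g, g ∈ edgesAt ends b \ insert h W → g ∉ M →
      ∃ g' w, g' ∉ M ∧ g' ∉ insert h W ∧ ends g' = s(b, w) ∧ w ≠ b ∧
        c g' ∈ fre ends c (insert h W) a := by
    intro g hg hgM
    rcases Finset.mem_sdiff.mp hg with ⟨hg3, hg4⟩
    have hb : b ∈ ends g := mem_edgesAt.mp hg3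
    obtain ⟨w, hw⟩ := Sym2.mem_iff_exists.mp hb
    have hwb : w ≠ b := by
      intro hh
      exact hloop g (by rw [hw, hh]; exact Sym2.mk_isDiag_iff.mpr rfl)
    refine ⟨g, w, hgM, hg4, hw, hwb, ?_⟩
    rw [← hcols]
    exact mem_colsAt_of hb hg4
  by_cases hm1 : g1 ∈ M
  · by_cases hm2 : g2 ∈ M
    · exfalso
      refine hM g1 hm1 g2 hm2 ⟨hne, b, ?_, ?_⟩
      · exact mem_edgesAt.mp (Finset.mem_sdiff.mp hg1).1
      · exact mem_edgesAt.mp (Finset.mem_sdiff.mp hg2).1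
    · exact key g2 hg2 hm2
  · exact key g1 hg1 hm1

/-- Extending a good colouring at a hole whose endpoints share a free colour. -/
private lemma ext_one [Fintype E] [DecidableEq E] {ends : E → Sym2 V}
    {M : Set E} {pre c : E → ℕ} {W : Finset E} {h : E} {a b : V} {ζ : ℕ}
    (hends : ends h = s(a, b)) (hhM : h ∉ M)
    (hgood : GoodC ends M pre c (insert h W))
    (hza : ζ ∈ fre ends c (insert h W) a) (hzb : ζ ∈ fre ends c (insert h W) b) :
    GoodC ends M pre (Function.update c h ζ) W := by
  obtain ⟨hprop, hpal, hpre⟩ := hgood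
  have hnotW : ∀ e : E, e ∉ W → e ≠ h → e ∉ insert h W := by
    intro e he1 he2 hmem
    rcases Finset.mem_insert.mp hmem with h1 | h1
    · exact he2 h1
    · exact he1 h1
  have hkey : ∀ f : E, f ∉ insert h W → MAdj ends h f → ζ ≠ c f := by
    intro f hf ⟨hne, v, hv1, hv2⟩
    rw [hends] at hv1
    rcases Sym2.mem_iff.mp hv1 with rfl | rfl
    · exact fun hh => not_cols_of_fre hza (hh ▸ mem_colsAt_of hv2 hf)
    · exact fun hh => not_cols_of_fre hzb (hh ▸ mem_colsAt_of hv2 hf)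
  refine ⟨?_, ?_, ?_⟩
  · intro e f he hf hadj
    by_cases he1 : e = h
    · subst he1
      have hf1 : f ≠ e := fun hh => hadj.1 hh.symm
      rw [Function.update_self, Function.update_of_ne hf1]
      exact hkey f (hnotW f hf hf1) hadj
    · by_cases hf1 : f = h
      · subst hf1
        rw [Function.update_self, Function.update_of_ne he1]
        have hadj' : MAdj ends f e := ⟨fun hh => hadj.1 hh.symm, hadj.2.imp (fun v hv => ⟨hv.2, hv.1⟩)⟩
        exact (hkey e (hnotW e he he1) hadj').symm
      · rw [Function.update_of_ne he1, Function.update_of_ne hf1]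
        exact hprop e f (hnotW e he he1) (hnotW f hf hf1) hadj
  · intro e he
    by_cases he1 : e = h
    · subst he1; rw [Function.update_self]; exact fre_subset_PP hza
    · rw [Function.update_of_ne he1]; exact hpal e (hnotW e he he1)
  · intro e heM
    have he1 : e ≠ h := fun hh => hhM (hh ▸ heM)
    rw [Function.update_of_ne he1]
    exact hpre e heM

/-- Performing the pivot preserves goodness (with the new hole at `g`). -/
private lemma pivot_good [Fintype E] [DecidableEq E] {ends : E → Sym2 V}
    {M : Set E} {pre c : E → ℕ} {W : Finset E} {h g : E} {a b w : V}
    (hends : ends h = s(a, b)) (hgends : ends g = s(b, w))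
    (hhM : h ∉ M) (hgW : g ∉ insert h W)
    (hgood : GoodC ends M pre c (insert h W))
    (hea : c g ∈ fre ends c (insert h W) a) :
    GoodC ends M pre (Function.update c h (c g)) (insert g W) := by
  obtain ⟨hprop, hpal, hpre⟩ := hgood
  have hbg : b ∈ ends g := by rw [hgends]; exact Sym2.mem_iff.mpr (Or.inl rfl)
  have hnotW : ∀ e : E, e ∉ insert g W → e ≠ h → e ∉ insert h W := by
    intro e he1 he2 hmem
    rcases Finset.mem_insert.mp hmem with h1 | h1
    · exact he2 h1
    · exact he1 (Finset.mem_insert_of_mem h1)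
  have hkey : ∀ f : E, f ∉ insert g W → f ≠ h → MAdj ends h f → c g ≠ c f := by
    intro f hf hfh ⟨hne, v, hv1, hv2⟩
    have hfg : f ≠ g := fun hh => hf (hh ▸ Finset.mem_insert_self g W)
    rw [hends] at hv1
    rcases Sym2.mem_iff.mp hv1 with rfl | rfl
    · exact fun hh => not_cols_of_fre hea (hh ▸ mem_colsAt_of hv2 (hnotW f hf hfh))
    · exact (hprop f g (hnotW f hf hfh) hgW ⟨hfg, v, hv2, hbg⟩).symm
  refine ⟨?_, ?_, ?_⟩
  · intro e f he hf hadj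
    by_cases he1 : e = h
    · subst he1
      have hf1 : f ≠ e := fun hh => hadj.1 hh.symm
      rw [Function.update_self, Function.update_of_ne hf1]
      exact hkey f hf hf1 hadj
    · by_cases hf1 : f = h
      · subst hf1
        rw [Function.update_self, Function.update_of_ne he1]
        have hadj' : MAdj ends f e :=
          ⟨fun hh => hadj.1 hh.symm, hadj.2.imp (fun v hv => ⟨hv.2, hv.1⟩)⟩
        exact (hkey e he he1 hadj').symm
      · rw [Function.update_of_ne he1, Function.update_of_ne hf1]
        exact hprop e f (hnotW e he he1) (hnotW f hf hf1) hadj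
  · intro e he
    by_cases he1 : e = h
    · subst he1; rw [Function.update_self]; exact fre_subset_PP hea
    · rw [Function.update_of_ne he1]; exact hpal e (hnotW e he he1)
  · intro e heM
    have he1 : e ≠ h := fun hh => hhM (hh ▸ heM)
    rw [Function.update_of_ne he1]
    exact hpre e heM

private lemma cols_pivot_b [Fintype E] [DecidableEq E] {ends : E → Sym2 V}
    {c : E → ℕ} {W : Finset E} {h g : E} {b : V}
    (hbh : b ∈ ends h) (hbg : b ∈ ends g) (hhW : h ∉ W) (hgW : g ∉ insert h W) :
    colsAt ends (Function.update c h (c g)) (insert g W) b =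
      colsAt ends c (insert h W) b := by
  have hgh : g ≠ h := fun hh => hgW (hh ▸ Finset.mem_insert_self h W)
  have hgW' : g ∉ W := fun hh => hgW (Finset.mem_insert_of_mem hh)
  ext k
  rw [mem_colsAt_iff, mem_colsAt_iff]
  constructor
  · rintro ⟨e, he1, he2, he3⟩
    by_cases heh : e = h
    · subst heh
      rw [Function.update_self] at he3
      exact ⟨g, hbg, hgW, he3⟩
    · rw [Function.update_of_ne heh] at he3
      have he2' : e ∉ insert h W := by
        intro hh
        rcases Finset.mem_insert.mp hh with h1 | h1
        · exact heh h1
        · exact he2 (Finset.mem_insert_of_mem h1)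
      exact ⟨e, he1, he2', he3⟩
  · rintro ⟨e, he1, he2, he3⟩
    by_cases heg : e = g
    · subst heg
      refine ⟨h, hbh, ?_, ?_⟩
      · intro hh
        rcases Finset.mem_insert.mp hh with h1 | h1
        · exact hgh h1.symm
        · exact hhW h1
      · rw [Function.update_self]; exact he3
    · have heh : e ≠ h := fun hh => he2 (hh ▸ Finset.mem_insert_self h W)
      have he2' : e ∉ insert g W := by
        intro hh
        rcases Finset.mem_insert.mp hh with h1 | h1
        · exact heg h1
        · exact he2 (Finset.mem_insert_of_mem h1)
      exact ⟨e, he1, he2', by rw [Function.update_of_ne heh]; exact he3⟩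

private lemma cols_pivot_a [Fintype E] [DecidableEq E] {ends : E → Sym2 V}
    {c : E → ℕ} {W : Finset E} {h g : E} {a : V}
    (hah : a ∈ ends h) (hag : a ∉ ends g) (hhW : h ∉ W) (hgh : g ≠ h) :
    colsAt ends (Function.update c h (c g)) (insert g W) a =
      insert (c g) (colsAt ends c (insert h W) a) := by
  ext k
  rw [mem_colsAt_iff, Finset.mem_insert, mem_colsAt_iff]
  constructor
  · rintro ⟨e, he1, he2, he3⟩
    by_cases heh : e = h
    · subst heh
      rw [Function.update_self] at he3
      exact Or.inl he3.symm
    · rw [Function.update_of_ne heh] at he3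
      refine Or.inr ⟨e, he1, ?_, he3⟩
      intro hh
      rcases Finset.mem_insert.mp hh with h1 | h1
      · exact heh h1
      · exact he2 (Finset.mem_insert_of_mem h1)
  · rintro (hk | ⟨e, he1, he2, he3⟩)
    · refine ⟨h, hah, ?_, ?_⟩
      · intro hh
        rcases Finset.mem_insert.mp hh with h1 | h1
        · exact hgh h1.symm
        · exact hhW h1
      · rw [Function.update_self]; exact hk.symm
    · have heh : e ≠ h := fun hh => he2 (hh ▸ Finset.mem_insert_self h W)
      have heg : e ≠ g := fun hh => hag (hh ▸ he1)
      refine ⟨e, he1, ?_, by rw [Function.update_of_ne heh]; exact he3⟩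
      intro hh
      rcases Finset.mem_insert.mp hh with h1 | h1
      · exact heg h1
      · exact he2 (Finset.mem_insert_of_mem h1)

private lemma cols_pivot_sub [Fintype E] [DecidableEq E] {ends : E → Sym2 V}
    {c : E → ℕ} {W : Finset E} {h g : E} {z : V} (hzh : z ∉ ends h) :
    colsAt ends (Function.update c h (c g)) (insert g W) z ⊆
      colsAt ends c (insert h W) z := by
  intro k hk
  obtain ⟨e, he1, he2, he3⟩ := mem_colsAt_iff.mp hk
  have heh : e ≠ h := fun hh => hzh (hh ▸ he1)
  rw [Function.update_of_ne heh] at he3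
  refine mem_colsAt_iff.mpr ⟨e, he1, ?_, he3⟩
  intro hh
  rcases Finset.mem_insert.mp hh with h1 | h1
  · exact heh h1
  · exact he2 (Finset.mem_insert_of_mem h1)

private lemma cols_pivot_eq [Fintype E] [DecidableEq E] {ends : E → Sym2 V}
    {c : E → ℕ} {W : Finset E} {h g : E} {z : V}
    (hzh : z ∉ ends h) (hzg : z ∉ ends g) (hhW : h ∉ W) :
    colsAt ends (Function.update c h (c g)) (insert g W) z =
      colsAt ends c (insert h W) z := by
  refine Finset.Subset.antisymm (cols_pivot_sub hzh) ?_
  intro k hk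
  obtain ⟨e, he1, he2, he3⟩ := mem_colsAt_iff.mp hk
  have heh : e ≠ h := fun hh => he2 (hh ▸ Finset.mem_insert_self h W)
  have heg : e ≠ g := fun hh => hzg (hh ▸ he1)
  refine mem_colsAt_iff.mpr ⟨e, he1, ?_, by rw [Function.update_of_ne heh]; exact he3⟩
  intro hh
  rcases Finset.mem_insert.mp hh with h1 | h1
  · exact heg h1
  · exact he2 (Finset.mem_insert_of_mem h1)

/-- The finite set of endpoints of edges. -/
private noncomputable def epts [DecidableEq V] (ends : E → Sym2 V) (e : E) : Finset V :=
  {(ends e).out.1, (ends e).out.2}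

private lemma mem_epts [DecidableEq V] {ends : E → Sym2 V} {e : E} {v : V}
    (hv : v ∈ ends e) : v ∈ epts ends e := by
  have h1 : ends e = s((ends e).out.1, (ends e).out.2) := by
    conv_lhs => rw [← (ends e).out_eq]
  rw [h1] at hv
  rcases Sym2.mem_iff.mp hv with rfl | rfl
  · exact Finset.mem_insert_self _ _
  · exact Finset.mem_insert_of_mem (Finset.mem_singleton_self _)

set_option maxHeartbeats 2000000 in
/-- The hole-walk: from a good partial colouring with a single extra hole, a good
colouring of everything except `W` can be constructed. -/
private lemma walk [Fintype E] [DecidableEq E] [DecidableEq V] {ends : E → Sym2 V}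
    {M : Set E} {pre : E → ℕ}
    (hloop : ∀ e, ¬ (ends e).IsDiag) (hdeg : ∀ v : V, mdeg ends v ≤ 3)
    (hM : ∀ e ∈ M, ∀ f ∈ M, ¬ MAdj ends e f)
    {W : Finset E} (A : Finset ℕ) (hAPP : A ⊆ PP) (hA2 : A.card = 2) :
    ∀ fuel : ℕ, ∀ (T : Finset V) (c : E → ℕ) (h : E) (a b : V),
      ends h = s(a, b) → h ∉ M → h ∉ W → a ∉ T → b ∉ T →
      GoodC ends M pre c (insert h W) →
      (fre ends c (insert h W) a = A ∨ fre ends c (insert h W) a = PP \ A) →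
      (∀ z ∈ T, ∃ (X : Finset ℕ) (ex : E) (z' : V),
        (X = A ∨ X = PP \ A) ∧ ex ∉ insert h W ∧ ends ex = s(z, z') ∧
        z' ∈ insert a T ∧ c ex ∈ X ∧ fre ends c (insert h W) z = X \ {c ex}) →
      (Finset.univ.biUnion (epts ends) \ T).card ≤ fuel →
      ∃ c', GoodC ends M pre c' W := by
  intro fuel
  induction fuel with
  | zero =>
    intro T c h a b hends _ _ haT _ _ _ _ hfuel
    exfalso
    have hain : a ∈ Finset.univ.biUnion (epts ends) \ T := by
      refine Finset.mem_sdiff.mpr ⟨Finset.mem_biUnion.mpr ⟨h, Finset.mem_univ h, ?_⟩, haT⟩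
      exact mem_epts (by rw [hends]; exact Sym2.mem_iff.mpr (Or.inl rfl))
    have := Finset.card_pos.mpr ⟨a, hain⟩
    omega
  | succ n IH =>
    intro T c h a b hends hhM hhW haT hbT hgood hJ1 hJ2 hfuel
    have hab' : a ∈ ends h := by rw [hends]; exact Sym2.mem_iff.mpr (Or.inl rfl)
    have hbb' : b ∈ ends h := by rw [hends]; exact Sym2.mem_iff.mpr (Or.inr rfl)
    have hne_ab : a ≠ b := by
      intro hh
      exact hloop h (by rw [hends, ← hh]; exact Sym2.mk_isDiag_iff.mpr rfl)
    by_cases hst : fre ends c (insert h W) a ∩ fre ends c (insert h W) b = ∅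
    · -- stuck: pivot
      obtain ⟨hca, hfb, hcolsb⟩ := stuck_struct hdeg hab' hbb' hgood hst
      obtain ⟨g, w, hgM, hgW, hgends, hwb, hgc⟩ := pivot_exists hloop hM hcolsb hca
      have hgh : g ≠ h := fun hh => hgW (hh ▸ Finset.mem_insert_self h W)
      have hgWW : g ∉ W := fun hh => hgW (Finset.mem_insert_of_mem hh)
      have hbg : b ∈ ends g := by rw [hgends]; exact Sym2.mem_iff.mpr (Or.inl rfl)
      have hwg : w ∈ ends g := by rw [hgends]; exact Sym2.mem_iff.mpr (Or.inr rfl)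
      have hwa : w ≠ a := by
        intro hh
        subst hh
        exact not_cols_of_fre hgc (mem_colsAt_of hwg hgW)
      have hag : a ∉ ends g := by
        rw [hgends]
        intro hh
        rcases Sym2.mem_iff.mp hh with h1 | h1
        · exact hne_ab h1
        · exact hwa h1.symm
      have hgood1 : GoodC ends M pre (Function.update c h (c g)) (insert g W) :=
        pivot_good hends hgends hhM hgW hgood hgc
      have hfb1 : fre ends (Function.update c h (c g)) (insert g W) b =
          fre ends c (insert h W) b := by
        unfold fre
        rw [cols_pivot_b hbb' hbg hhW hgW]
      have hJ1b : fre ends (Function.update c h (c g)) (insert g W) b = A ∨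
          fre ends (Function.update c h (c g)) (insert g W) b = PP \ A := by
        rw [hfb1, hfb]
        rcases hJ1 with h1 | h1
        · rw [h1]; exact Or.inr rfl
        · rw [h1, Finset.sdiff_sdiff_eq_self hAPP]; exact Or.inl rfl
      by_cases hwT : w ∈ T
      · -- re-entry: win
        obtain ⟨X, ex, z', hX, hexW, hexends, hz', hcex, hfw⟩ := hJ2 w hwT
        have hexh : ex ≠ h := fun hh => hexW (hh ▸ Finset.mem_insert_self h W)
        have hexWW : ex ∉ W := fun hh => hexW (Finset.mem_insert_of_mem hh)
        have hexg : ex ≠ g := by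
          intro hh
          subst hh
          rw [hgends] at hexends
          rcases Sym2.eq_iff.mp hexends with ⟨h1, _⟩ | ⟨h1, _⟩
          · exact hwb h1.symm
          · rw [← h1] at hz'
            rcases Finset.mem_insert.mp hz' with h3 | h3
            · exact hne_ab h3.symm
            · exact hbT h3
        have hwex : w ∈ ends ex := by rw [hexends]; exact Sym2.mem_iff.mpr (Or.inl rfl)
        have hcexe : c ex ≠ c g := hgood.1 ex g hexW hgW ⟨hexg, w, hwex, hwg⟩
        have heX : c g ∉ X := by
          intro hh
          have h2 : c g ∈ X \ {c ex} :=
            Finset.mem_sdiff.mpr ⟨hh, fun h3 => hcexe (Finset.mem_singleton.mp h3).symm⟩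
          rw [← hfw] at h2
          exact not_cols_of_fre h2 (mem_colsAt_of hwg hgW)
        have hXb : X = fre ends c (insert h W) b := by
          rcases hJ1 with h1 | h1 <;> rcases hX with h2 | h2
          · exact absurd (h2 ▸ h1 ▸ hgc) heX
          · rw [hfb, h1, h2]
          · rw [hfb, h1, Finset.sdiff_sdiff_eq_self hAPP, h2]
          · exact absurd (h2 ▸ h1 ▸ hgc) heX
        have hX2 : X.card = 2 := by
          rcases hX with h2 | h2
          · rw [h2]; exact hA2
          · rw [h2, Finset.card_sdiff_of_subset hAPP, PP_card, hA2]
        have hc1' : (X \ {c ex}).card = 1 := by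
          rw [Finset.card_sdiff_of_subset (Finset.singleton_subset_iff.mpr hcex),
            Finset.card_singleton, hX2]
        obtain ⟨t', ht'⟩ := Finset.card_eq_one.mp hc1'
        have ht'mem : t' ∈ X \ {c ex} := by rw [ht']; exact Finset.mem_singleton_self t'
        have ht'X : t' ∈ X := (Finset.mem_sdiff.mp ht'mem).1
        have ht'frew : t' ∈ fre ends c (insert h W) w := by
          rw [hfw, ht']; exact Finset.mem_singleton_self t'
        have hwnoth : w ∉ ends h := by
          rw [hends]
          intro hh
          rcases Sym2.mem_iff.mp hh with h1 | h1
          · exact hwa h1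
          · exact hwb h1
        have ht'w1 : t' ∈ fre ends (Function.update c h (c g)) (insert g W) w := by
          refine Finset.mem_sdiff.mpr ⟨fre_subset_PP ht'frew, fun hk => ?_⟩
          exact not_cols_of_fre ht'frew (cols_pivot_sub hwnoth hk)
        have ht'b1 : t' ∈ fre ends (Function.update c h (c g)) (insert g W) b := by
          rw [hfb1, ← hXb]; exact ht'X
        exact ⟨_, ext_one hgends hgM hgood1 ht'b1 ht'w1⟩
      · -- virgin: recurse
        refine IH (insert a T) (Function.update c h (c g)) g b w hgends hgM hgWW ?_ ?_
          hgood1 hJ1b ?_ ?_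
        · intro hh
          rcases Finset.mem_insert.mp hh with h1 | h1
          · exact hne_ab h1.symm
          · exact hbT h1
        · intro hh
          rcases Finset.mem_insert.mp hh with h1 | h1
          · exact hwa h1
          · exact hwT h1
        · -- J2 for insert a T
          intro z hz
          rcases Finset.mem_insert.mp hz with rfl | hzT
          · -- z = a
            refine ⟨fre ends c (insert h W) z, h, b, hJ1, ?_, hends, ?_, ?_, ?_⟩
            · intro hh
              rcases Finset.mem_insert.mp hh with h1 | h1
              · exact hgh h1.symm
              · exact hhW h1
            · exact Finset.mem_insert_self b _
            · rw [Function.update_self]; exact hgc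
            · rw [Function.update_self]
              unfold fre
              rw [cols_pivot_a hab' hag hhW hgh]
              ext k
              simp only [Finset.mem_sdiff, Finset.mem_insert, Finset.mem_singleton]
              tauto
          · -- z ∈ T
            obtain ⟨X, ex, z', hX, hexW, hexends, hz', hcex, hfz⟩ := hJ2 z hzT
            have hexh : ex ≠ h := by
              intro hh
              subst hh
              have hzex : z ∈ ends ex := by
                rw [hexends]; exact Sym2.mem_iff.mpr (Or.inl rfl)
              rw [hends] at hzex
              rcases Sym2.mem_iff.mp hzex with h1 | h1
              · exact haT (h1 ▸ hzT)
              · exact hbT (h1 ▸ hzT)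
            have hexg : ex ≠ g := by
              intro hh
              subst hh
              have hzex : z ∈ ends ex := by
                rw [hexends]; exact Sym2.mem_iff.mpr (Or.inl rfl)
              rw [hgends] at hzex
              rcases Sym2.mem_iff.mp hzex with h1 | h1
              · exact hbT (h1 ▸ hzT)
              · exact hwT (h1 ▸ hzT)
            have hexWW : ex ∉ W := fun hh => hexW (Finset.mem_insert_of_mem hh)
            have hznh : z ∉ ends h := by
              rw [hends]
              intro hh
              rcases Sym2.mem_iff.mp hh with h1 | h1
              · exact haT (h1 ▸ hzT)
              · exact hbT (h1 ▸ hzT)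
            have hzng : z ∉ ends g := by
              rw [hgends]
              intro hh
              rcases Sym2.mem_iff.mp hh with h1 | h1
              · exact hbT (h1 ▸ hzT)
              · exact hwT (h1 ▸ hzT)
            refine ⟨X, ex, z', hX, ?_, hexends, ?_, ?_, ?_⟩
            · intro hh
              rcases Finset.mem_insert.mp hh with h1 | h1
              · exact hexg h1
              · exact hexWW h1
            · exact Finset.mem_insert_of_mem hz'
            · rw [Function.update_of_ne hexh]; exact hcex
            · rw [Function.update_of_ne hexh]
              unfold fre
              rw [cols_pivot_eq hznh hzng hhW]
              exact hfz
        · -- fuel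
          have hasub : Finset.univ.biUnion (epts ends) \ insert a T =
              (Finset.univ.biUnion (epts ends) \ T).erase a := by
            ext x
            simp only [Finset.mem_sdiff, Finset.mem_insert, Finset.mem_erase]
            tauto
          have hain : a ∈ Finset.univ.biUnion (epts ends) \ T :=
            Finset.mem_sdiff.mpr
              ⟨Finset.mem_biUnion.mpr ⟨h, Finset.mem_univ h, mem_epts hab'⟩, haT⟩
          rw [hasub, Finset.card_erase_of_mem hain]
          omega
    · -- not stuck: extend directly
      obtain ⟨ζ, hζ⟩ := Finset.nonempty_iff_ne_empty.mpr hst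
      rcases Finset.mem_inter.mp hζ with ⟨hζa, hζb⟩
      exact ⟨_, ext_one hends hhM hgood hζa hζb⟩

end Aux

/-- Theorem 6: in a subcubic multigraph, any precoloured matching extends to a proper
edge-colouring with palette `{1, 2, 3, 4}`. -/
theorem subcubic_extend_matching [Fintype E] (ends : E → Sym2 V)
    (hloop : ∀ e, ¬ (ends e).IsDiag)
    (hdeg : ∀ v : V, mdeg ends v ≤ 3)
    (M : Set E) (hM : ∀ e ∈ M, ∀ f ∈ M, ¬ MAdj ends e f)
    (pre : E → ℕ) (hpal : ∀ e ∈ M, pre e ∈ Finset.Icc 1 4) :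
    ∃ c : E → ℕ, MProper ends c ∧ (∀ e, c e ∈ Finset.Icc 1 4) ∧
      ∀ e ∈ M, c e = pre e := by
  classical
  have base : ∀ (W : Finset E), (∀ e, e ∉ W → e ∈ M) → ∃ c, GoodC ends M pre c W := by
    intro W hW
    refine ⟨fun e => if e ∈ M then pre e else 1, ?_, ?_, ?_⟩
    · intro e f he hf hadj
      exact absurd hadj (hM e (hW e he) f (hW f hf))
    · intro e he
      have heM := hW e he
      simp only [if_pos heM]
      exact hpal e heM
    · intro e heM
      simp only [if_pos heM]
  have main : ∀ (n : ℕ) (W : Finset E), (∀ e ∈ M, e ∉ W) →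
      (Finset.univ.filter (fun e => e ∉ M ∧ e ∉ W)).card ≤ n →
      ∃ c, GoodC ends M pre c W := by
    intro n
    induction n with
    | zero =>
      intro W hWM hcard
      apply base
      intro e he
      by_contra heM
      have h1 : e ∈ Finset.univ.filter (fun e => e ∉ M ∧ e ∉ W) :=
        Finset.mem_filter.mpr ⟨Finset.mem_univ e, heM, he⟩
      have h2 := Finset.card_pos.mpr ⟨e, h1⟩
      omega
    | succ n IH =>
      intro W hWM hcard
      by_cases hemp : (Finset.univ.filter (fun e => e ∉ M ∧ e ∉ W)) = ∅
      · apply base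
        intro e he
        by_contra heM
        exact (Finset.eq_empty_iff_forall_notMem.mp hemp e)
          (Finset.mem_filter.mpr ⟨Finset.mem_univ e, heM, he⟩)
      · obtain ⟨e0, he0⟩ := Finset.nonempty_iff_ne_empty.mpr hemp
        rw [Finset.mem_filter] at he0
        obtain ⟨-, he0M, he0W⟩ := he0
        have hWM' : ∀ e ∈ M, e ∉ insert e0 W := by
          intro e heM hh
          rcases Finset.mem_insert.mp hh with h1 | h1
          · exact he0M (h1 ▸ heM)
          · exact hWM e heM h1
        have hcard' : (Finset.univ.filter (fun e => e ∉ M ∧ e ∉ insert e0 W)).card ≤ n := by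
          have hsub : Finset.univ.filter (fun e => e ∉ M ∧ e ∉ insert e0 W) ⊆
              (Finset.univ.filter (fun e => e ∉ M ∧ e ∉ W)).erase e0 := by
            intro e he
            rw [Finset.mem_filter] at he
            obtain ⟨h1, h2, h3⟩ := he
            refine Finset.mem_erase.mpr
              ⟨fun hh => h3 (hh ▸ Finset.mem_insert_self e0 W), ?_⟩
            exact Finset.mem_filter.mpr ⟨h1, h2, fun hh => h3 (Finset.mem_insert_of_mem hh)⟩
          have h4 := Finset.card_le_card hsub
          have h5 : e0 ∈ Finset.univ.filter (fun e => e ∉ M ∧ e ∉ W) :=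
            Finset.mem_filter.mpr ⟨Finset.mem_univ _, he0M, he0W⟩
          rw [Finset.card_erase_of_mem h5] at h4
          omega
        obtain ⟨c0, hc0⟩ := IH (insert e0 W) hWM' hcard'
        have ha0 : (ends e0).out.1 ∈ ends e0 := Sym2.out_fst_mem (ends e0)
        obtain ⟨b, hends⟩ := Sym2.mem_iff_exists.mp ha0
        set a := (ends e0).out.1 with ha_def
        by_cases hst : fre ends c0 (insert e0 W) a ∩ fre ends c0 (insert e0 W) b = ∅
        · have hab' : a ∈ ends e0 := ha0
          have hbb' : b ∈ ends e0 := by rw [hends]; exact Sym2.mem_iff.mpr (Or.inr rfl)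
          obtain ⟨hca, -, -⟩ := stuck_struct hdeg hab' hbb' hc0 hst
          exact walk hloop hdeg hM (fre ends c0 (insert e0 W) a) fre_subset_PP hca
            (Finset.univ.biUnion (epts ends) \ (∅ : Finset V)).card (∅ : Finset V)
            c0 e0 a b hends he0M he0W (Finset.notMem_empty a) (Finset.notMem_empty b)
            hc0 (Or.inl rfl) (fun z hz => absurd hz (Finset.notMem_empty z)) le_rfl
        · obtain ⟨ζ, hζ⟩ := Finset.nonempty_iff_ne_empty.mpr hst
          rcases Finset.mem_inter.mp hζ with ⟨hζa, hζb⟩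
          exact ⟨_, ext_one hends he0M hc0 hζa hζb⟩
  obtain ⟨c, hc⟩ := main (Finset.univ.filter (fun e => e ∉ M ∧ e ∉ (∅ : Finset E))).card ∅
    (fun e _ => Finset.notMem_empty e) le_rfl
  refine ⟨c, ?_, ?_, hc.2.2⟩
  · intro e f hadj
    exact hc.1 e f (Finset.notMem_empty e) (Finset.notMem_empty f) hadj
  · intro e
    exact hc.2.1 e (Finset.notMem_empty e)
end

section
/- Let C be an odd cycle (as a simple graph), and suppose each edge e is assigned a list ℓ(e) of exactly 2 colours. If there is no proper edge-colouring of C choosing each edge's colour from its list, then all the lists ℓ(e) are identical. -/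
/-!
If two consecutive lists differ, say `a ∈ ℓ (k + 1) \ ℓ k`, colour edge `k + 1` with `a` and go
round the cycle greedily: every list has two colours, so each edge can avoid the colour of its
predecessor, and the last edge `k` never clashes with its successor since `a ∉ ℓ k`. Hence
consecutive lists coincide, and so all lists do.
-/

namespace ZMod

theorem val_add_one_of_ne_neg_one {n : ℕ} [NeZero n] {i : ZMod n} (hi : i ≠ -1) :
    (i + 1).val = i.val + 1 := by
  rcases (show i.val + 1 ≤ n from i.val_lt).lt_or_eq with hlt | heq
  · rw [← val_cast_of_lt hlt, Nat.cast_succ, natCast_zmod_val]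
  · refine absurd ?_ hi
    have : ((i.val + 1 : ℕ) : ZMod n) = 0 := by rw [heq, natCast_self]
    push_cast [natCast_zmod_val] at this
    exact eq_neg_of_add_eq_zero_left this

theorem eq_of_periodic_one {n : ℕ} {β : Type*} {f : ZMod n → β} (hf : Function.Periodic f 1)
    (i j : ZMod n) : f i = f j := by
  obtain ⟨m, hm⟩ := intCast_surjective (j - i)
  calc f i = f (i + m * 1) := (hf.int_mul m i).symm
    _ = f j := by rw [mul_one, hm, add_sub_cancel]

end ZMod

section ListColoring

variable {α : Type*}

theorem exists_path_listColoring (L : ℕ → Finset α) (hL : ∀ m, 2 ≤ (L m).card) {a : α}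
    (ha : a ∈ L 0) : ∃ c : ℕ → α, c 0 = a ∧ (∀ m, c m ∈ L m) ∧ ∀ m, c (m + 1) ≠ c m := by
  choose next next_mem next_ne using fun m => (L m).exists_mem_ne (hL m)
  refine ⟨fun m => Nat.rec a (fun m x => next (m + 1) x) m, rfl, ?_, fun m => next_ne _ _⟩
  rintro (_ | m)
  · exact ha
  · exact next_mem _ _

variable {n : ℕ}

def IsCycleListColoring (L : ZMod n → Finset α) (c : ZMod n → α) : Prop :=
  (∀ i, c i ∈ L i) ∧ ∀ i, c i ≠ c (i + 1)

variable [NeZero n]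

theorem exists_cycleListColoring_of_mem_zero_of_notMem_neg_one (L : ZMod n → Finset α)
    (hL : ∀ i, 2 ≤ (L i).card) {a : α} (ha : a ∈ L 0) (ha' : a ∉ L (-1)) :
    ∃ c, IsCycleListColoring L c := by
  obtain ⟨g, hg0, hgL, hgne⟩ :=
    exists_path_listColoring (fun m => L m) (fun m => hL m) (by simpa using ha)
  have hmem : ∀ i, g i.val ∈ L i := fun i => by simpa using hgL i.val
  refine ⟨fun i => g i.val, hmem, fun i => ?_⟩
  by_cases hi : i = -1
  · subst hi
    show g (-1 : ZMod n).val ≠ g ((-1 : ZMod n) + 1).val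
    rw [neg_add_cancel, ZMod.val_zero, hg0]
    exact ne_of_mem_of_not_mem (hmem (-1)) ha'
  · simp only [ZMod.val_add_one_of_ne_neg_one hi]
    exact (hgne _).symm

theorem exists_cycleListColoring_of_mem_of_notMem (L : ZMod n → Finset α)
    (hL : ∀ i, 2 ≤ (L i).card) {k : ZMod n} {a : α} (ha : a ∈ L (k + 1)) (ha' : a ∉ L k) :
    ∃ c, IsCycleListColoring L c := by
  obtain ⟨c, hcL, hcne⟩ := exists_cycleListColoring_of_mem_zero_of_notMem_neg_one
    (fun i => L (i + (k + 1))) (fun i => hL _) (by simpa using ha) (by simpa using ha')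
  refine ⟨fun i => c (i - (k + 1)), fun i => by simpa using hcL (i - (k + 1)), fun i => ?_⟩
  simpa only [add_sub_right_comm] using hcne (i - (k + 1))

theorem eq_add_one_of_not_exists_cycleListColoring (L : ZMod n → Finset α) {d : ℕ}
    (hd : 2 ≤ d) (hL : ∀ i, (L i).card = d)
    (hno : ¬ ∃ c, IsCycleListColoring L c) (k : ZMod n) :
    L (k + 1) = L k := by
  by_contra hne
  have hsub : ¬ L (k + 1) ⊆ L k := fun h =>
    hne (Finset.eq_of_subset_of_card_le h (by rw [hL, hL]))
  obtain ⟨a, ha, ha'⟩ := Finset.not_subset.mp hsub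
  exact hno (exists_cycleListColoring_of_mem_of_notMem L (fun i => hL i ▸ hd) ha ha')

end ListColoring

theorem odd_cycle_lists_identical_general (n : ℕ) (hn : 3 ≤ n)
    (ℓ : ZMod n → Finset ℕ) (hcard : ∀ i, (ℓ i).card = 2)
    (hno : ¬ ∃ c : ZMod n → ℕ, (∀ i, c i ∈ ℓ i) ∧ ∀ i, c i ≠ c (i + 1)) :
    ∀ i j : ZMod n, ℓ i = ℓ j :=
  have : NeZero n := ⟨by omega⟩
  ZMod.eq_of_periodic_one (eq_add_one_of_not_exists_cycleListColoring ℓ le_rfl hcard hno)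

/-- Lists of size two on the edges of an odd cycle admit no proper edge-colouring
only if they are all identical. The edges of the cycle are indexed by `ZMod n`,
edge `i` being consecutive to edge `i + 1`. -/
theorem odd_cycle_lists_identical (n : ℕ) (hodd : Odd n) (hn : 3 ≤ n)
    (ℓ : ZMod n → Finset ℕ) (hcard : ∀ i, (ℓ i).card = 2)
    (hno : ¬ ∃ c : ZMod n → ℕ, (∀ i, c i ∈ ℓ i) ∧ ∀ i, c i ≠ c (i + 1)) :
    ∀ i j : ZMod n, ℓ i = ℓ j :=
  odd_cycle_lists_identical_general n hn ℓ hcard hno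
end

section
/- Let G be a multi-triangle on vertices u, v, w with m = |E(G)| total edges, and suppose each edge e is assigned a list ℓ(e) of exactly m−1 colours. If there is no proper edge-colouring of G from the lists, then all m lists are identical. -/
variable {V E : Type*}

/-- On a multi-triangle (a loopless multigraph all of whose edges join pairs from
`{u, v, w}`), with `m = |E|` edges and lists of size `m - 1`: if there is no proper
edge-colouring from the lists, then all lists are identical. -/
theorem multi_triangle_lists_identical [Fintype E] (ends : E → Sym2 V)
    (u v w : V) (hloop : ∀ e, ¬ (ends e).IsDiag)
    (hedges : ∀ (e : E) (x : V), x ∈ ends e → x = u ∨ x = v ∨ x = w)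
    (ℓ : E → Finset ℕ) (hcard : ∀ e, (ℓ e).card = Fintype.card E - 1)
    (hno : ¬ ∃ c : E → ℕ, (∀ e, c e ∈ ℓ e) ∧ MProper ends c) :
    ∀ e f : E, ℓ e = ℓ f := by
  classical
  -- any two edges share an endpoint
  have hshare : ∀ e f : E, ∃ x : V, x ∈ ends e ∧ x ∈ ends f := by
    intro e f
    obtain ⟨⟨a, b⟩, he⟩ := Quot.exists_rep (ends e)
    obtain ⟨⟨c, d⟩, hf⟩ := Quot.exists_rep (ends f)
    have he' : ends e = s(a, b) := he.symm
    have hf' : ends f = s(c, d) := hf.symm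
    have hab : a ≠ b := by
      intro h; exact hloop e (by rw [he']; exact Sym2.mk_isDiag_iff.mpr h)
    have hcd : c ≠ d := by
      intro h; exact hloop f (by rw [hf']; exact Sym2.mk_isDiag_iff.mpr h)
    have hma : a ∈ ends e := by rw [he']; exact Sym2.mem_mk_left a b
    have hmb : b ∈ ends e := by rw [he']; exact Sym2.mem_mk_right a b
    have hmc : c ∈ ends f := by rw [hf']; exact Sym2.mem_mk_left c d
    have hmd : d ∈ ends f := by rw [hf']; exact Sym2.mem_mk_right c d
    have ha := hedges e a hma
    have hb := hedges e b hmb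
    have hc := hedges f c hmc
    have hd := hedges f d hmd
    have key : a = c ∨ a = d ∨ b = c ∨ b = d := by
      rcases ha with rfl | rfl | rfl <;> rcases hb with rfl | rfl | rfl <;>
        rcases hc with rfl | rfl | rfl <;> rcases hd with rfl | rfl | rfl <;> tauto
    rcases key with rfl | rfl | rfl | rfl
    · exact ⟨a, hma, hmc⟩
    · exact ⟨a, hma, hmd⟩
    · exact ⟨b, hmb, hmc⟩
    · exact ⟨b, hmb, hmd⟩
  -- no injective choice function
  have hno' : ¬ ∃ c : E → ℕ, Function.Injective c ∧ ∀ e, c e ∈ ℓ e := by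
    rintro ⟨c, hinj, hmem⟩
    exact hno ⟨c, hmem, fun e f hef => fun h => hef.1 (hinj h)⟩
  -- Hall fails
  have hall : ¬ ∀ s : Finset E, s.card ≤ (s.biUnion ℓ).card := fun h =>
    hno' ((Finset.all_card_le_biUnion_card_iff_exists_injective ℓ).mp h)
  push_neg at hall
  obtain ⟨s, hs⟩ := hall
  have hsub : ∀ i ∈ s, ℓ i ⊆ s.biUnion ℓ := fun i hi => Finset.subset_biUnion_of_mem ℓ hi
  have hsne : s.Nonempty := by
    rcases s.eq_empty_or_nonempty with h | h
    · simp [h] at hs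
    · exact h
  obtain ⟨i, hi⟩ := hsne
  have h1 : Fintype.card E - 1 ≤ (s.biUnion ℓ).card := by
    rw [← hcard i]; exact Finset.card_le_card (hsub i hi)
  have h2 : s.card ≤ Fintype.card E := s.card_le_univ
  have hcardE : 1 ≤ Fintype.card E := Fintype.card_pos_iff.mpr ⟨i⟩
  have hseq : s.card = Fintype.card E := by omega
  have hsuniv : s = Finset.univ := Finset.eq_univ_of_card s hseq
  have hbu : (s.biUnion ℓ).card = Fintype.card E - 1 := by omega
  have key : ∀ e : E, ℓ e = s.biUnion ℓ := by
    intro e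
    apply Finset.eq_of_subset_of_card_le
    · exact hsub e (hsuniv ▸ Finset.mem_univ e)
    · rw [hbu, hcard e]
  intro e f
  rw [key e, key f]
end

section
/- Minimal counterexample degree-sum property: let G be a simple graph with maximum degree Δ, M a matching in G precoloured from the palette {1,…,Δ+1}, and suppose every proper subgraph of G admits an extension of (the restriction of) the precolouring but G does not. Then for every edge uv of G not in M, d(u) + d(v) ≥ Δ + 3. -/
/-- Minimal counterexample property: if every proper (spanning) subgraph of `G` admits
an extension of the restricted precoloured matching from the palette `{1, …, Δ + 1}`
but `G` does not, then every edge `uv ∉ M` satisfies `d(u) + d(v) ≥ Δ + 3`. -/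
theorem minimal_counterexample_degree_sum {V : Type*} [Fintype V]
    (G : SimpleGraph V) [DecidableRel G.Adj]
    (Δ : ℕ) (hΔ : G.maxDegree = Δ)
    (M : Set (Sym2 V)) (hME : M ⊆ G.edgeSet)
    (hmatch : ∀ e ∈ M, ∀ f ∈ M, e ≠ f → ∀ x : V, x ∈ e → x ∉ f)
    (pre : Sym2 V → ℕ)
    (hpal : ∀ e ∈ M, pre e ∈ Finset.Icc 1 (Δ + 1))
    (hsub : ∀ H : SimpleGraph V, H ≤ G → H ≠ G →
      ∃ c : Sym2 V → ℕ,
        (∀ e ∈ H.edgeSet, c e ∈ Finset.Icc 1 (Δ + 1)) ∧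
        (∀ e ∈ H.edgeSet, ∀ f ∈ H.edgeSet, e ≠ f → (∃ x : V, x ∈ e ∧ x ∈ f) →
          c e ≠ c f) ∧
        ∀ e ∈ M ∩ H.edgeSet, c e = pre e)
    (hG : ¬ ∃ c : Sym2 V → ℕ,
        (∀ e ∈ G.edgeSet, c e ∈ Finset.Icc 1 (Δ + 1)) ∧
        (∀ e ∈ G.edgeSet, ∀ f ∈ G.edgeSet, e ≠ f → (∃ x : V, x ∈ e ∧ x ∈ f) →
          c e ≠ c f) ∧
        ∀ e ∈ M, c e = pre e) :
    ∀ u v : V, G.Adj u v → s(u, v) ∉ M → Δ + 3 ≤ G.degree u + G.degree v := by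

  intro u v huv hMuv
  by_contra hlt
  push_neg at hlt
  classical
  set H : SimpleGraph V := G.deleteEdges {s(u, v)} with hH
  have hHle : H ≤ G := SimpleGraph.deleteEdges_le _
  have hEH : H.edgeSet = G.edgeSet \ {s(u, v)} := SimpleGraph.edgeSet_deleteEdges _
  have hmemG : s(u, v) ∈ G.edgeSet := huv
  have hHne : H ≠ G := by
    intro h
    have : s(u, v) ∈ H.edgeSet := h ▸ hmemG
    rw [hEH] at this
    exact this.2 rfl
  obtain ⟨c, hc1, hc2, hc3⟩ := hsub H hHle hHne
  -- set of edges adjacent to uv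
  set T : Finset (Sym2 V) :=
    (G.incidenceFinset u ∪ G.incidenceFinset v).erase s(u, v) with hT
  have hmemU : s(u, v) ∈ G.incidenceFinset u := by
    rw [SimpleGraph.mem_incidenceFinset]
    exact ⟨hmemG, Sym2.mem_mk_left u v⟩
  have hmemV : s(u, v) ∈ G.incidenceFinset v := by
    rw [SimpleGraph.mem_incidenceFinset]
    exact ⟨hmemG, Sym2.mem_mk_right u v⟩
  have hcardT : T.card ≤ Δ := by
    have h1 : (G.incidenceFinset u ∪ G.incidenceFinset v).card
        + (G.incidenceFinset u ∩ G.incidenceFinset v).card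
        = (G.incidenceFinset u).card + (G.incidenceFinset v).card :=
      Finset.card_union_add_card_inter _ _
    have h2 : 1 ≤ (G.incidenceFinset u ∩ G.incidenceFinset v).card :=
      Finset.card_pos.2 ⟨s(u, v), Finset.mem_inter.2 ⟨hmemU, hmemV⟩⟩
    have h3 : T.card + 1 = (G.incidenceFinset u ∪ G.incidenceFinset v).card :=
      Finset.card_erase_add_one (Finset.mem_union.2 (Or.inl hmemU))
    have h4 : (G.incidenceFinset u).card = G.degree u := G.card_incidenceFinset_eq_degree u
    have h5 : (G.incidenceFinset v).card = G.degree v := G.card_incidenceFinset_eq_degree v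
    omega
  have hcardIm : (T.image c).card < (Finset.Icc 1 (Δ + 1)).card := by
    have := Finset.card_image_le (s := T) (f := c)
    rw [Nat.card_Icc]
    omega
  obtain ⟨k, hk, hknot⟩ := Finset.not_subset.1 (fun hsubIm =>
    absurd (Finset.card_le_card hsubIm) (not_le.2 hcardIm))
  -- extend colouring
  apply hG
  refine ⟨fun e => if e = s(u, v) then k else c e, ?_, ?_, ?_⟩
  · intro e he
    by_cases h : e = s(u, v)
    · simp [h, hk]
    · simp only [h, if_neg]
      exact hc1 e (by rw [hEH]; exact ⟨he, h⟩)
  · intro e he f hf hef ⟨x, hxe, hxf⟩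
    beta_reduce
    by_cases h1 : e = s(u, v) <;> by_cases h2 : f = s(u, v)
    · exact absurd (h1.trans h2.symm) hef
    · subst h1
      rw [if_pos rfl, if_neg h2]
      intro heq
      apply hknot
      rw [heq]
      apply Finset.mem_image_of_mem
      refine Finset.mem_erase.2 ⟨h2, ?_⟩
      rcases Sym2.mem_iff.1 hxe with rfl | rfl
      · exact Finset.mem_union.2 (Or.inl (by rw [SimpleGraph.mem_incidenceFinset]; exact ⟨hf, hxf⟩))
      · exact Finset.mem_union.2 (Or.inr (by rw [SimpleGraph.mem_incidenceFinset]; exact ⟨hf, hxf⟩))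
    · subst h2
      rw [if_pos rfl, if_neg h1]
      intro heq
      apply hknot
      rw [← heq]
      apply Finset.mem_image_of_mem
      refine Finset.mem_erase.2 ⟨h1, ?_⟩
      rcases Sym2.mem_iff.1 hxf with rfl | rfl
      · exact Finset.mem_union.2 (Or.inl (by rw [SimpleGraph.mem_incidenceFinset]; exact ⟨he, hxe⟩))
      · exact Finset.mem_union.2 (Or.inr (by rw [SimpleGraph.mem_incidenceFinset]; exact ⟨he, hxe⟩))
    · rw [if_neg h1, if_neg h2]
      exact hc2 e (by rw [hEH]; exact ⟨he, h1⟩) f (by rw [hEH]; exact ⟨hf, h2⟩) hef ⟨x, hxe, hxf⟩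
  · intro e heM
    have hne : e ≠ s(u, v) := fun h => hMuv (h ▸ heM)
    simp only [hne, if_neg]
    exact hc3 e ⟨heM, by rw [hEH]; exact ⟨hME heM, hne⟩⟩
end
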